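/- arXiv:1312.0551 — 10 statements merged into one kernel-verified Lean document; each statement's English description precedes it below -/
import Mathlib

section
/- Let w and w' be Dyck words of type A of semilength n, and for a Dyck word define its height sequence by letting the i-th entry be the number of u's occurring before the i-th occurrence of r. Then the height sequence of w is componentwise less than or equal to that of w' if and only if the height sequence of ψ(w) is componentwise less than or equal to that of ψ(w'). In other words, ψ is an automorphism of the lattice D_n^A of Dyck paths of type A under dominance order. -/
/-- A word over the alphabet `{u, r}` is modeled as a `List Bool`,
where `true` stands for the letter `u` and `false` for `r`. -/
def IsDyckWordA (n : ℕ) (w : List Bool) : Prop :=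
  w.length = 2 * n ∧ w.count true = n ∧ w.count false = n ∧
    ∀ ℓ : ℕ, (w.take ℓ).count false ≤ (w.take ℓ).count true

/-- The height sequence of a word: the `i`-th entry is the number of `u`'s
occurring before the `i`-th occurrence of `r`. -/
def heights : List Bool → List ℕ
  | [] => []
  | true :: w => (heights w).map (· + 1)
  | false :: w => 0 :: heights w

/-- The map `ψ`: replace every `u` by `r` and every `r` by `u`, then reverse the word. -/
def psi (w : List Bool) : List Bool :=
  (w.map (fun b => !b)).reverse

/-! Swapping the letters of a word transposes its height sequence, viewed as a partition, and
reversing the word complements the heights and reverses their order. Hence the `i`-th height of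
`ψ w` is `#r - #{j | h j ≤ #u - 1 - i}` with `h = heights w`, an antitone function of `h`, so
dominance passes from `w, w'` to `ψ w, ψ w'`; as `ψ` is an involution preserving the letter
counts, it also passes back. -/

lemma heights_append (v w : List Bool) :
    heights (v ++ w) = heights v ++ (heights w).map (· + v.count true) := by
  induction v with
  | nil => simp [heights]
  | cons b v ih => cases b <;> simp [heights, ih, Function.comp_def, add_assoc]

lemma length_heights (v : List Bool) : (heights v).length = v.count false := by
  induction v with
  | nil => rfl
  | cons b v ih => cases b <;> simp [heights, ih]

lemma heights_reverse (v : List Bool) :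
    heights v.reverse = ((heights v).map (v.count true - ·)).reverse := by
  induction v with
  | nil => rfl
  | cons b v ih => cases b <;> simp [heights, heights_append, ih, Function.comp_def]

lemma heights_map_not (v : List Bool) :
    heights (v.map not) = (List.range (v.count true)).map fun j => (heights v).countP (· ≤ j) := by
  induction v with
  | nil => rfl
  | cons b v ih =>
    cases b
    · simp [heights, ih, Function.comp_def]
    · simp [heights, ih, List.range_succ_eq_map, List.countP_map, Function.comp_def]

lemma count_map_not (v : List Bool) (b : Bool) : (v.map not).count b = v.count (!b) := by
  simpa using List.count_map_of_injective v not Bool.not_injective (!b)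

lemma count_psi (w : List Bool) (b : Bool) : (psi w).count b = w.count (!b) := by
  rw [psi, List.count_reverse, count_map_not]

lemma psi_involutive : Function.Involutive psi := by
  intro w
  simp [psi, Function.comp_def]

lemma getD_heights_psi (w : List Bool) {i : ℕ} (hi : i < w.count true) :
    (heights (psi w)).getD i 0 =
      w.count false - (heights w).countP (· ≤ w.count true - 1 - i) := by
  rw [psi, heights_reverse, heights_map_not, count_map_not]
  simp [List.getD_eq_getElem?_getD, hi]

lemma countP_le_countP_of_getD_le {l l' : List ℕ} (hlen : l.length = l'.length)
    (hle : ∀ i < l.length, l.getD i 0 ≤ l'.getD i 0) (j : ℕ) :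
    l'.countP (· ≤ j) ≤ l.countP (· ≤ j) := by
  induction l generalizing l' with
  | nil => simp [List.length_eq_zero_iff.mp hlen.symm]
  | cons a l ih =>
    obtain _ | ⟨a', l'⟩ := l'
    · simp at hlen
    have head_le : a ≤ a' := hle 0 (by simp)
    have tail_le := ih (by simpa using hlen) fun i hi => hle (i + 1) (by simpa using hi)
    simp only [List.countP_cons, decide_eq_true_eq]
    split_ifs <;> omega

lemma heights_psi_le_of_heights_le {a b : ℕ} {w w' : List Bool}
    (hw : w.count true = a ∧ w.count false = b) (hw' : w'.count true = a ∧ w'.count false = b)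
    (hle : ∀ i < b, (heights w).getD i 0 ≤ (heights w').getD i 0) :
    ∀ i < a, (heights (psi w)).getD i 0 ≤ (heights (psi w')).getD i 0 := by
  intro i hi
  rw [getD_heights_psi w (by omega), getD_heights_psi w' (by omega), hw.1, hw.2, hw'.1, hw'.2]
  refine Nat.sub_le_sub_left (countP_le_countP_of_getD_le ?_ ?_ _) b
  · rw [length_heights, length_heights, hw.2, hw'.2]
  · rwa [length_heights, hw.2]

theorem psi_lattice_automorphism (n : ℕ) (w w' : List Bool)
    (hw : IsDyckWordA n w) (hw' : IsDyckWordA n w') :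
    (∀ i < n, (heights w).getD i 0 ≤ (heights w').getD i 0) ↔
      (∀ i < n, (heights (psi w)).getD i 0 ≤ (heights (psi w')).getD i 0) := by
  have counts : w.count true = n ∧ w.count false = n := ⟨hw.2.1, hw.2.2.1⟩
  have counts' : w'.count true = n ∧ w'.count false = n := ⟨hw'.2.1, hw'.2.2.1⟩
  refine ⟨heights_psi_le_of_heights_le counts counts', fun hle => ?_⟩
  have psi_counts (v : List Bool) (h : v.count true = n ∧ v.count false = n) :
      (psi v).count true = n ∧ (psi v).count false = n := by
    simpa [count_psi] using h.symm
  simpa [psi_involutive _] using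
    heights_psi_le_of_heights_le (psi_counts w counts) (psi_counts w' counts') hle
end

section
/- For every n > 0, the poset D_n^B under the dominance order is a distributive lattice; more precisely, if h = (h_1,…,h_k) and h' = (h'_1,…,h'_{k'}) are elements of D_n^B with k ≥ k', then the sequence (min{h_1,h'_1},…,min{h_{k'},h'_{k'}}, h_{k'+1},…,h_k) and the sequence (max{h_1,h'_1},…,max{h_{k'},h'_{k'}}) both lie in D_n^B and are, respectively, the meet and the join of h and h' in the dominance order. -/
/-- Height sequences of Dyck paths of type B of semilength `n` (written 0-indexed):
lists `(h_1, …, h_k)` with `1 ≤ k ≤ n`, `h_i ≥ i` for `i ∈ [k]`,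
`h_1 ≤ h_2 ≤ … ≤ h_{k-1} ≤ 2n - k`, and `h_k ∈ {2n - k, 2n - k + 1}`. -/
def IsHeightSeqB (n : ℕ) (h : List ℕ) : Prop :=
  1 ≤ h.length ∧ h.length ≤ n ∧
    (∀ i < h.length, i + 1 ≤ h.getD i 0) ∧
    (∀ i : ℕ, i + 2 < h.length → h.getD i 0 ≤ h.getD (i + 1) 0) ∧
    (2 ≤ h.length → h.getD (h.length - 2) 0 ≤ 2 * n - h.length) ∧
    (h.getD (h.length - 1) 0 = 2 * n - h.length ∨
      h.getD (h.length - 1) 0 = 2 * n - h.length + 1)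

/-- The dominance order on height sequences of type B:
`(h_1, …, h_k) ≤_D (h'_1, …, h'_{k'})` iff `k ≥ k'` and `h_i ≤ h'_i` for all `i ∈ [k']`. -/
def DomLeB (a b : List ℕ) : Prop :=
  b.length ≤ a.length ∧ ∀ j < b.length, a.getD j 0 ≤ b.getD j 0

/-!
Send a list `h` to the function `j ↦ h_j` for `j < h.length` and `j ↦ ⊤` beyond. This embedding
of lists into the distributive lattice `ℕ → WithTop ℕ` is injective and turns the dominance order
into the pointwise order, and the two sequences of the statement are sent to the pointwise `⊓`
and `⊔` of the images. So it suffices that `D_n^B` is closed under these two operations, which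
follows from the monotonicity of height sequences and the bound `h_i ≤ 2n - (i + 2)` for
`i + 2 ≤ k`.
-/

theorem IsHeightSeqB.getD_le_getD_succ {n : ℕ} {h : List ℕ} (hh : IsHeightSeqB n h) {i : ℕ}
    (hi : i + 1 < h.length) : h.getD i 0 ≤ h.getD (i + 1) 0 := by
  obtain ⟨-, -, -, hmono, hpen, hlast⟩ := hh
  by_cases hi' : i + 2 < h.length
  · exact hmono i hi'
  · obtain rfl : i = h.length - 2 := by omega
    have := hpen (by omega)
    rw [show h.length - 2 + 1 = h.length - 1 by omega]
    omega

theorem IsHeightSeqB.getD_le_getD {n : ℕ} {h : List ℕ} (hh : IsHeightSeqB n h) {i j : ℕ}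
    (hij : i ≤ j) (hj : j < h.length) : h.getD i 0 ≤ h.getD j 0 := by
  induction j, hij using Nat.le_induction with
  | base => rfl
  | succ j _ ih => exact (ih (by omega)).trans (hh.getD_le_getD_succ hj)

theorem IsHeightSeqB.getD_le_two_mul_sub {n : ℕ} {h : List ℕ} (hh : IsHeightSeqB n h) {i : ℕ}
    (hi : i + 2 ≤ h.length) : h.getD i 0 ≤ 2 * n - (i + 2) := by
  have hpen := hh.2.2.2.2.1 (by omega)
  have := hh.getD_le_getD (i := i) (j := h.length - 2) (by omega) (by omega)
  omega

/-- The meet of `a` and `b` in the dominance order, provided `b.length ≤ a.length`. -/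
def domMeet (a b : List ℕ) : List ℕ :=
  List.ofFn fun j : Fin a.length =>
    if (j : ℕ) < b.length then min (a.getD j 0) (b.getD j 0) else a.getD j 0

/-- The join of `a` and `b` in the dominance order, provided `b.length ≤ a.length`. -/
def domJoin (a b : List ℕ) : List ℕ :=
  List.ofFn fun j : Fin b.length => max (a.getD j 0) (b.getD j 0)

@[simp]
theorem length_domMeet (a b : List ℕ) : (domMeet a b).length = a.length := by
  simp [domMeet]

@[simp]
theorem length_domJoin (a b : List ℕ) : (domJoin a b).length = b.length := by
  simp [domJoin]

theorem getD_domMeet (a b : List ℕ) {j : ℕ} (hj : j < a.length) :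
    (domMeet a b).getD j 0 =
      if j < b.length then min (a.getD j 0) (b.getD j 0) else a.getD j 0 := by
  rw [List.getD_eq_getElem _ _ (by simpa using hj)]
  simp only [domMeet, List.getElem_ofFn]

theorem getD_domJoin (a b : List ℕ) {j : ℕ} (hj : j < b.length) :
    (domJoin a b).getD j 0 = max (a.getD j 0) (b.getD j 0) := by
  rw [List.getD_eq_getElem _ _ (by simpa using hj)]
  simp only [domJoin, List.getElem_ofFn]

theorem IsHeightSeqB.domMeet {n : ℕ} {a b : List ℕ} (ha : IsHeightSeqB n a)
    (hb : IsHeightSeqB n b) (hba : b.length ≤ a.length) : IsHeightSeqB n (domMeet a b) := by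
  obtain ⟨ha₁, ha₂, ha₃, -, ha₅, ha₆⟩ := id ha
  obtain ⟨-, -, hb₃, -, -, hb₆⟩ := id hb
  refine ⟨by simpa using ha₁, by simpa using ha₂, fun i hi => ?_, fun i hi => ?_,
    fun hlen => ?_, ?_⟩ <;> simp only [length_domMeet] at *
  · rw [getD_domMeet _ _ hi]
    split_ifs with hib
    · exact le_min (ha₃ i hi) (hb₃ i hib)
    · exact ha₃ i hi
  · rw [getD_domMeet _ _ (by omega), getD_domMeet _ _ (by omega)]
    have hai := ha.getD_le_getD_succ (i := i) (by omega)
    split_ifs with hib hib'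
    · exact min_le_min hai (hb.getD_le_getD_succ hib')
    · exact (min_le_left _ _).trans hai
    · omega
    · exact hai
  · rw [getD_domMeet _ _ (by omega)]
    split_ifs
    · exact (min_le_left _ _).trans (ha₅ hlen)
    · exact ha₅ hlen
  · rw [getD_domMeet _ _ (by omega)]
    split_ifs with hlast
    · rw [show b.length = a.length by omega] at hb₆
      omega
    · exact ha₆

theorem IsHeightSeqB.domJoin {n : ℕ} {a b : List ℕ} (ha : IsHeightSeqB n a)
    (hb : IsHeightSeqB n b) (hba : b.length ≤ a.length) : IsHeightSeqB n (domJoin a b) := by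
  obtain ⟨-, ha₂, -, -, -, ha₆⟩ := id ha
  obtain ⟨hb₁, -, hb₃, -, hb₅, hb₆⟩ := id hb
  refine ⟨by simpa using hb₁, by simpa using hba.trans ha₂, fun i hi => ?_, fun i hi => ?_,
    fun hlen => ?_, ?_⟩ <;> simp only [length_domJoin] at *
  · rw [getD_domJoin _ _ hi]
    exact (hb₃ i hi).trans (le_max_right _ _)
  · rw [getD_domJoin _ _ (by omega), getD_domJoin _ _ (by omega)]
    exact max_le_max (ha.getD_le_getD_succ (by omega)) (hb.getD_le_getD_succ (by omega))
  · rw [getD_domJoin _ _ (by omega)]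
    have := ha.getD_le_two_mul_sub (i := b.length - 2) (by omega)
    exact max_le (by omega) (hb₅ hlen)
  · rw [getD_domJoin _ _ (by omega)]
    rcases hba.eq_or_lt with hab | hab
    · rw [← hab] at ha₆
      omega
    · have := ha.getD_le_two_mul_sub (i := b.length - 1) (by omega)
      omega

def domEmbedding (h : List ℕ) (j : ℕ) : WithTop ℕ :=
  if j < h.length then (h.getD j 0 : WithTop ℕ) else ⊤

theorem domEmbedding_le_iff (a b : List ℕ) : domEmbedding a ≤ domEmbedding b ↔ DomLeB a b := by
  constructor
  · intro hab
    have hlen : b.length ≤ a.length := by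
      by_contra! hlt
      simpa [domEmbedding, hlt] using hab a.length
    refine ⟨hlen, fun j hj => ?_⟩
    simpa [domEmbedding, hj, hj.trans_le hlen] using hab j
  · rintro ⟨hlen, hab⟩ j
    unfold domEmbedding
    split_ifs with hja hjb hjb
    · exact WithTop.coe_le_coe.mpr (hab j hjb)
    · exact le_top
    · omega
    · exact le_rfl

theorem domEmbedding_injective : Function.Injective domEmbedding := by
  intro a b hab
  obtain ⟨⟨hba, hab⟩, ⟨hab', hba'⟩⟩ : DomLeB a b ∧ DomLeB b a :=
    ⟨(domEmbedding_le_iff a b).1 hab.le, (domEmbedding_le_iff b a).1 hab.ge⟩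
  refine List.ext_getElem (by omega) fun j hja hjb => ?_
  simpa [List.getD_eq_getElem, hja, hjb] using le_antisymm (hab j hjb) (hba' j hja)

theorem domEmbedding_domMeet {a b : List ℕ} (hba : b.length ≤ a.length) :
    domEmbedding (domMeet a b) = domEmbedding a ⊓ domEmbedding b := by
  funext j
  by_cases hja : j < a.length
  · simp only [domEmbedding, Pi.inf_apply, length_domMeet, getD_domMeet _ _ hja, if_pos hja]
    split_ifs
    · exact WithTop.coe_min _ _
    · exact (inf_top_eq _).symm
  · simp only [domEmbedding, Pi.inf_apply, length_domMeet, if_neg hja,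
      if_neg (show ¬ j < b.length by omega), inf_top_eq]

theorem domEmbedding_domJoin {a b : List ℕ} (hba : b.length ≤ a.length) :
    domEmbedding (domJoin a b) = domEmbedding a ⊔ domEmbedding b := by
  funext j
  by_cases hjb : j < b.length
  · simp only [domEmbedding, Pi.sup_apply, length_domJoin, getD_domJoin _ _ hjb, if_pos hjb,
      if_pos (hjb.trans_le hba)]
    exact WithTop.coe_max _ _
  · simp only [domEmbedding, Pi.sup_apply, length_domJoin, if_neg hjb, sup_top_eq]

def domInf (a b : List ℕ) : List ℕ :=
  if b.length ≤ a.length then domMeet a b else domMeet b a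

def domSup (a b : List ℕ) : List ℕ :=
  if b.length ≤ a.length then domJoin a b else domJoin b a

theorem IsHeightSeqB.domInf {n : ℕ} {a b : List ℕ} (ha : IsHeightSeqB n a)
    (hb : IsHeightSeqB n b) : IsHeightSeqB n (domInf a b) := by
  unfold _root_.domInf
  split_ifs with hba
  · exact ha.domMeet hb hba
  · exact hb.domMeet ha (by omega)

theorem IsHeightSeqB.domSup {n : ℕ} {a b : List ℕ} (ha : IsHeightSeqB n a)
    (hb : IsHeightSeqB n b) : IsHeightSeqB n (domSup a b) := by
  unfold _root_.domSup
  split_ifs with hba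
  · exact ha.domJoin hb hba
  · exact hb.domJoin ha (by omega)

theorem domEmbedding_domInf (a b : List ℕ) :
    domEmbedding (domInf a b) = domEmbedding a ⊓ domEmbedding b := by
  unfold domInf
  split_ifs with hba
  · exact domEmbedding_domMeet hba
  · rw [domEmbedding_domMeet (by omega), inf_comm]

theorem domEmbedding_domSup (a b : List ℕ) :
    domEmbedding (domSup a b) = domEmbedding a ⊔ domEmbedding b := by
  unfold domSup
  split_ifs with hba
  · exact domEmbedding_domJoin hba
  · rw [domEmbedding_domJoin (by omega), sup_comm]

abbrev heightSeqBDistribLattice (n : ℕ) : DistribLattice {x : List ℕ // IsHeightSeqB n x} :=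
  letI : LE {x : List ℕ // IsHeightSeqB n x} := ⟨fun a b => DomLeB a.1 b.1⟩
  letI : LT {x : List ℕ // IsHeightSeqB n x} := ⟨fun a b => domEmbedding a.1 < domEmbedding b.1⟩
  letI : Min {x : List ℕ // IsHeightSeqB n x} := ⟨fun a b => ⟨domInf a.1 b.1, a.2.domInf b.2⟩⟩
  letI : Max {x : List ℕ // IsHeightSeqB n x} := ⟨fun a b => ⟨domSup a.1 b.1, a.2.domSup b.2⟩⟩
  Function.Injective.distribLattice (domEmbedding ∘ Subtype.val)
    (domEmbedding_injective.comp Subtype.val_injective) (domEmbedding_le_iff _ _) Iff.rfl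
    (fun a b => domEmbedding_domSup a.1 b.1) (fun a b => domEmbedding_domInf a.1 b.1)

theorem domLeB_domMeet_left {a b : List ℕ} (hba : b.length ≤ a.length) :
    DomLeB (domMeet a b) a := by
  rw [← domEmbedding_le_iff, domEmbedding_domMeet hba]
  exact inf_le_left

theorem domLeB_domMeet_right {a b : List ℕ} (hba : b.length ≤ a.length) :
    DomLeB (domMeet a b) b := by
  rw [← domEmbedding_le_iff, domEmbedding_domMeet hba]
  exact inf_le_right

theorem DomLeB.domMeet {a b z : List ℕ} (hba : b.length ≤ a.length) (hza : DomLeB z a)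
    (hzb : DomLeB z b) : DomLeB z (domMeet a b) := by
  rw [← domEmbedding_le_iff] at *
  rw [domEmbedding_domMeet hba]
  exact le_inf hza hzb

theorem domLeB_domJoin_left {a b : List ℕ} (hba : b.length ≤ a.length) :
    DomLeB a (domJoin a b) := by
  rw [← domEmbedding_le_iff, domEmbedding_domJoin hba]
  exact le_sup_left

theorem domLeB_domJoin_right {a b : List ℕ} (hba : b.length ≤ a.length) :
    DomLeB b (domJoin a b) := by
  rw [← domEmbedding_le_iff, domEmbedding_domJoin hba]
  exact le_sup_right

theorem DomLeB.domJoin {a b z : List ℕ} (hba : b.length ≤ a.length) (haz : DomLeB a z)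
    (hbz : DomLeB b z) : DomLeB (domJoin a b) z := by
  rw [← domEmbedding_le_iff] at *
  rw [domEmbedding_domJoin hba]
  exact sup_le haz hbz

theorem dyckB_distribLattice_meet_join_general (n : ℕ) :
    (∃ inst : DistribLattice {x : List ℕ // IsHeightSeqB n x},
      ∀ a b : {x : List ℕ // IsHeightSeqB n x}, inst.le a b ↔ DomLeB a.1 b.1) ∧
    ∀ h h' : List ℕ, IsHeightSeqB n h → IsHeightSeqB n h' → h'.length ≤ h.length →
      (IsHeightSeqB n (List.ofFn (fun j : Fin h.length =>
          if (j : ℕ) < h'.length then min (h.getD j 0) (h'.getD j 0) else h.getD j 0)) ∧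
       IsHeightSeqB n (List.ofFn (fun j : Fin h'.length =>
          max (h.getD j 0) (h'.getD j 0))) ∧
       DomLeB (List.ofFn (fun j : Fin h.length =>
          if (j : ℕ) < h'.length then min (h.getD j 0) (h'.getD j 0) else h.getD j 0)) h ∧
       DomLeB (List.ofFn (fun j : Fin h.length =>
          if (j : ℕ) < h'.length then min (h.getD j 0) (h'.getD j 0) else h.getD j 0)) h' ∧
       (∀ z : List ℕ, IsHeightSeqB n z → DomLeB z h → DomLeB z h' →
          DomLeB z (List.ofFn (fun j : Fin h.length =>
            if (j : ℕ) < h'.length then min (h.getD j 0) (h'.getD j 0) else h.getD j 0))) ∧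
       DomLeB h (List.ofFn (fun j : Fin h'.length => max (h.getD j 0) (h'.getD j 0))) ∧
       DomLeB h' (List.ofFn (fun j : Fin h'.length => max (h.getD j 0) (h'.getD j 0))) ∧
       (∀ z : List ℕ, IsHeightSeqB n z → DomLeB h z → DomLeB h' z →
          DomLeB (List.ofFn (fun j : Fin h'.length => max (h.getD j 0) (h'.getD j 0))) z)) :=
  ⟨⟨heightSeqBDistribLattice n, fun _ _ => Iff.rfl⟩,
    fun _ _ hh hh' hk =>
      ⟨hh.domMeet hh' hk, hh.domJoin hh' hk, domLeB_domMeet_left hk, domLeB_domMeet_right hk,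
        fun _ _ hzh hzh' => hzh.domMeet hk hzh', domLeB_domJoin_left hk, domLeB_domJoin_right hk,
        fun _ _ hhz hh'z => hhz.domJoin hk hh'z⟩⟩

theorem dyckB_distribLattice_meet_join (n : ℕ) (hn : 0 < n) :
    (∃ inst : DistribLattice {x : List ℕ // IsHeightSeqB n x},
      ∀ a b : {x : List ℕ // IsHeightSeqB n x}, inst.le a b ↔ DomLeB a.1 b.1) ∧
    ∀ h h' : List ℕ, IsHeightSeqB n h → IsHeightSeqB n h' → h'.length ≤ h.length →
      (IsHeightSeqB n (List.ofFn (fun j : Fin h.length =>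
          if (j : ℕ) < h'.length then min (h.getD j 0) (h'.getD j 0) else h.getD j 0)) ∧
       IsHeightSeqB n (List.ofFn (fun j : Fin h'.length =>
          max (h.getD j 0) (h'.getD j 0))) ∧
       DomLeB (List.ofFn (fun j : Fin h.length =>
          if (j : ℕ) < h'.length then min (h.getD j 0) (h'.getD j 0) else h.getD j 0)) h ∧
       DomLeB (List.ofFn (fun j : Fin h.length =>
          if (j : ℕ) < h'.length then min (h.getD j 0) (h'.getD j 0) else h.getD j 0)) h' ∧
       (∀ z : List ℕ, IsHeightSeqB n z → DomLeB z h → DomLeB z h' →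
          DomLeB z (List.ofFn (fun j : Fin h.length =>
            if (j : ℕ) < h'.length then min (h.getD j 0) (h'.getD j 0) else h.getD j 0))) ∧
       DomLeB h (List.ofFn (fun j : Fin h'.length => max (h.getD j 0) (h'.getD j 0))) ∧
       DomLeB h' (List.ofFn (fun j : Fin h'.length => max (h.getD j 0) (h'.getD j 0))) ∧
       (∀ z : List ℕ, IsHeightSeqB n z → DomLeB h z → DomLeB h' z →
          DomLeB (List.ofFn (fun j : Fin h'.length => max (h.getD j 0) (h'.getD j 0))) z)) :=
  dyckB_distribLattice_meet_join_general n
end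

section
/- An element of D_n^B with height sequence (h_1,…,h_k) is join-irreducible in the lattice D_n^B if and only if there exists a unique index i ∈ [k] such that h_i > i and h_i > h_{i−1}, where h_0 := 0. -/
/-- `p` is the join of `x` and `y` in `D_n^B`, i.e. the least upper bound of `{x, y}`
with respect to the dominance order. -/
def IsJoinB (n : ℕ) (x y p : List ℕ) : Prop :=
  DomLeB x p ∧ DomLeB y p ∧
    ∀ z : List ℕ, IsHeightSeqB n z → DomLeB x z → DomLeB y z → DomLeB p z

/-- `p` is join-irreducible in the lattice `D_n^B`: it is not the least element,
and whenever `p` is the join of two elements `x` and `y`, then `p = x` or `p = y`. -/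
def JoinIrredB (n : ℕ) (p : List ℕ) : Prop :=
  IsHeightSeqB n p ∧
    ¬(∀ q : List ℕ, IsHeightSeqB n q → DomLeB p q) ∧
    ∀ x y : List ℕ, IsHeightSeqB n x → IsHeightSeqB n y →
      IsJoinB n x y p → p = x ∨ p = y

namespace List

variable {α : Type*} (l : List α) (d : α) {i j : ℕ} (v : α)

theorem getD_set_self (h : i < l.length) : (l.set i v).getD i d = v := by grind

theorem getD_set_of_ne (h : i ≠ j) : (l.set i v).getD j d = l.getD j d := by grind

end List

/-- The paper's condition `h_i > i`, `h_i > h_{i-1}` at the 0-based index `j = i - 1`. -/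
def IsAscentB (p : List ℕ) (j : ℕ) : Prop :=
  j < p.length ∧ j + 1 < p.getD j 0 ∧ (if j = 0 then 0 else p.getD (j - 1) 0) < p.getD j 0

def botB (n : ℕ) : List ℕ := (List.range n).map (· + 1)

def lowerAt (n : ℕ) (p : List ℕ) (a : ℕ) : List ℕ :=
  p.set a (p.getD a 0 - 1) ++
    if a + 1 = p.length ∧ p.getD a 0 = 2 * n - p.length then [p.getD a 0] else []

theorem domLeB_refl (p : List ℕ) : DomLeB p p := ⟨le_rfl, fun _ _ => le_rfl⟩

theorem IsAscentB.getD_lt {p : List ℕ} {i : ℕ} (h : IsAscentB p (i + 1)) :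
    p.getD i 0 < p.getD (i + 1) 0 := by
  simpa using h.2.2

namespace IsHeightSeqB

variable {n : ℕ} {p x : List ℕ}

theorem getD_le_getD_succ_s10 (H : IsHeightSeqB n p) {i : ℕ} (hi : i + 1 < p.length) :
    p.getD i 0 ≤ p.getD (i + 1) 0 := by
  obtain ⟨-, -, -, hmono, hpen, hlast⟩ := H
  by_cases h : i + 2 < p.length
  · exact hmono i h
  · have hpen := hpen (by omega)
    rw [show i = p.length - 2 by omega, show p.length - 2 + 1 = p.length - 1 by omega]
    omega

theorem getD_mono (H : IsHeightSeqB n p) {i j : ℕ} (hij : i ≤ j) (hj : j < p.length) :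
    p.getD i 0 ≤ p.getD j 0 := by
  induction j, hij using Nat.le_induction with
  | base => rfl
  | succ j _ ih => exact (ih (by omega)).trans (H.getD_le_getD_succ_s10 hj)

theorem getD_le_of_succ_lt (H : IsHeightSeqB n p) {i : ℕ} (hi : i + 1 < p.length) :
    p.getD i 0 ≤ 2 * n - p.length :=
  (H.getD_mono (j := p.length - 2) (by omega) (by omega)).trans (H.2.2.2.2.1 (by omega))

theorem le_getD_last (H : IsHeightSeqB n p) : 2 * n - p.length ≤ p.getD (p.length - 1) 0 := by
  rcases H.2.2.2.2.2 with h | h <;> omega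

theorem getD_le (H : IsHeightSeqB n p) {i : ℕ} (hi : i < p.length) :
    p.getD i 0 ≤ 2 * n - p.length + 1 := by
  have := H.getD_mono (i := i) (j := p.length - 1) (by omega) (by omega)
  rcases H.2.2.2.2.2 with h | h <;> omega

theorem getD_eq_of_not_isAscentB (Hx : IsHeightSeqB n x) (hxp : DomLeB x p) {m : ℕ}
    (hm : m < p.length) (hasc : ¬ IsAscentB p m)
    (hprev : m ≠ 0 → x.getD (m - 1) 0 = p.getD (m - 1) 0) :
    x.getD m 0 = p.getD m 0 := by
  have hle := hxp.2 m hm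
  have hlow := Hx.2.2.1 m (by have := hxp.1; omega)
  rcases Nat.eq_zero_or_pos m with rfl | hpos
  · simp only [IsAscentB, if_pos] at hasc
    omega
  · have hstep := Hx.getD_le_getD_succ_s10 (i := m - 1) (by have := hxp.1; omega)
    rw [Nat.sub_add_cancel hpos] at hstep
    simp only [IsAscentB, if_neg hpos.ne'] at hasc
    have := hprev hpos.ne'
    omega

theorem eq_of_domLeB (Hx : IsHeightSeqB n x) (Hp : IsHeightSeqB n p) (hxp : DomLeB x p)
    (hasc : ∀ m, IsAscentB p m → x.getD m 0 = p.getD m 0) : x = p := by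
  have hget : ∀ m < p.length, x.getD m 0 = p.getD m 0 := by
    intro m
    induction m with
    | zero =>
      intro hm
      by_cases h : IsAscentB p 0
      · exact hasc 0 h
      · exact Hx.getD_eq_of_not_isAscentB hxp hm h (absurd rfl)
    | succ m ih =>
      intro hm
      by_cases h : IsAscentB p (m + 1)
      · exact hasc _ h
      · exact Hx.getD_eq_of_not_isAscentB hxp hm h fun _ => ih (by omega)
  have hlen : x.length = p.length := by
    by_contra hne
    have := hxp.1
    have := Hp.1
    have := Hx.2.1
    have := Hx.getD_le_of_succ_lt (i := p.length - 1) (by omega)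
    have := hget (p.length - 1) (by omega)
    have := Hp.le_getD_last
    omega
  refine List.ext_getElem hlen fun i hi _ => ?_
  rw [← List.getD_eq_getElem x 0, ← List.getD_eq_getElem p 0, hget i (by omega)]

end IsHeightSeqB

theorem length_botB (n : ℕ) : (botB n).length = n := by simp [botB]

theorem getD_botB {n j : ℕ} (hj : j < n) : (botB n).getD j 0 = j + 1 := by
  simp [botB, List.getD_eq_getElem?_getD, hj]

theorem isHeightSeqB_botB {n : ℕ} (hn : 0 < n) : IsHeightSeqB n (botB n) := by
  unfold IsHeightSeqB
  simp only [length_botB]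
  refine ⟨hn, le_rfl, fun i hi => ?_, fun i hi => ?_, fun _ => ?_, Or.inl ?_⟩
  all_goals rw [getD_botB (by omega)]
  · rw [getD_botB (by omega)]; omega
  all_goals omega

theorem IsHeightSeqB.botB_domLeB {n : ℕ} {q : List ℕ} (H : IsHeightSeqB n q) :
    DomLeB (botB n) q :=
  ⟨by simpa [length_botB] using H.2.1, fun j hj => by
    rw [getD_botB (by have := H.2.1; omega)]; exact H.2.2.1 j hj⟩

section lowerAt

variable {n a : ℕ} {p x : List ℕ}

theorem length_lowerAt_of_neg (h : ¬(a + 1 = p.length ∧ p.getD a 0 = 2 * n - p.length)) :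
    (lowerAt n p a).length = p.length := by
  rw [lowerAt, if_neg h]
  simp

theorem length_lowerAt_of_pos (h : a + 1 = p.length ∧ p.getD a 0 = 2 * n - p.length) :
    (lowerAt n p a).length = p.length + 1 := by
  rw [lowerAt, if_pos h]
  simp

theorem getD_lowerAt_self (ha : a < p.length) : (lowerAt n p a).getD a 0 = p.getD a 0 - 1 := by
  rw [lowerAt, List.getD_append _ _ _ _ (by simpa using ha), List.getD_set_self _ _ _ ha]

theorem getD_lowerAt_of_ne {m : ℕ} (hm : m < p.length) (hma : m ≠ a) :
    (lowerAt n p a).getD m 0 = p.getD m 0 := by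
  rw [lowerAt, List.getD_append _ _ _ _ (by simpa using hm), List.getD_set_of_ne _ _ _ (Ne.symm hma)]

theorem getD_lowerAt_length (h : a + 1 = p.length ∧ p.getD a 0 = 2 * n - p.length) :
    (lowerAt n p a).getD p.length 0 = p.getD a 0 := by
  rw [lowerAt, if_pos h, List.getD_append_right _ _ _ _ (by simp)]
  simp

theorem lowerAt_domLeB : DomLeB (lowerAt n p a) p := by
  refine ⟨?_, fun m hm => ?_⟩
  · by_cases h : a + 1 = p.length ∧ p.getD a 0 = 2 * n - p.length
    · rw [length_lowerAt_of_pos h]; omega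
    · rw [length_lowerAt_of_neg h]
  · rcases eq_or_ne m a with rfl | h
    · rw [getD_lowerAt_self hm]; omega
    · rw [getD_lowerAt_of_ne hm h]

theorem not_domLeB_lowerAt (ha : IsAscentB p a) : ¬ DomLeB p (lowerAt n p a) := fun h => by
  have := h.2 a (by have := (lowerAt_domLeB (n := n) (p := p) (a := a)).1; have := ha.1; omega)
  rw [getD_lowerAt_self ha.1] at this
  have := ha.2.1
  omega

theorem getD_lowerAt_le_getD_succ (H : IsHeightSeqB n p) (ha : IsAscentB p a) {i : ℕ}
    (hi : i + 1 < p.length) : (lowerAt n p a).getD i 0 ≤ (lowerAt n p a).getD (i + 1) 0 := by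
  rcases eq_or_ne i a with rfl | hia
  · rw [getD_lowerAt_self (by omega), getD_lowerAt_of_ne hi (by omega)]
    have := H.getD_le_getD_succ_s10 hi
    omega
  rcases eq_or_ne (i + 1) a with rfl | hia'
  · rw [getD_lowerAt_self hi, getD_lowerAt_of_ne (by omega) hia]
    have := ha.getD_lt
    omega
  · rw [getD_lowerAt_of_ne (by omega) hia, getD_lowerAt_of_ne hi hia']
    exact H.getD_le_getD_succ_s10 hi

theorem isHeightSeqB_lowerAt (H : IsHeightSeqB n p) (ha : IsAscentB p a) :
    IsHeightSeqB n (lowerAt n p a) := by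
  have hself := getD_lowerAt_self (n := n) ha.1
  have hpeak := ha.2.1
  have hlow (i : ℕ) (hi : i < p.length) : i + 1 ≤ (lowerAt n p a).getD i 0 := by
    rcases eq_or_ne i a with rfl | hia
    · omega
    · rw [getD_lowerAt_of_ne hi hia]; exact H.2.2.1 i hi
  have hmono (i : ℕ) (hi : i + 1 < p.length) := getD_lowerAt_le_getD_succ H ha hi
  unfold IsHeightSeqB
  by_cases hc : a + 1 = p.length ∧ p.getD a 0 = 2 * n - p.length
  · have hnew := getD_lowerAt_length hc
    have hkn := H.2.1
    rw [length_lowerAt_of_pos hc]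
    refine ⟨by omega, by omega, fun i hi => ?_, fun i hi => hmono i (by omega), fun _ => ?_, ?_⟩
    · rcases (by omega : i < p.length ∨ i = p.length) with hi | rfl
      · exact hlow i hi
      · omega
    · rw [show p.length + 1 - 2 = a by omega, hself]; omega
    · right; rw [show p.length + 1 - 1 = p.length by omega, hnew]
      omega
  · rw [length_lowerAt_of_neg hc]
    refine ⟨H.1, H.2.1, hlow, fun i hi => hmono i (by omega), fun h2 => ?_, ?_⟩
    · exact (lowerAt_domLeB.2 _ (by omega)).trans (H.2.2.2.2.1 h2)
    · by_cases hlast : a = p.length - 1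
      · rw [← hlast, hself]
        have := H.2.2.2.2.2
        rw [← hlast] at this
        have := H.1
        omega
      · rw [getD_lowerAt_of_ne (by have := H.1; omega) (Ne.symm hlast)]
        exact H.2.2.2.2.2

theorem IsHeightSeqB.domLeB_lowerAt (Hx : IsHeightSeqB n x) (hxp : DomLeB x p)
    (hxa : x.getD a 0 < p.getD a 0) : DomLeB x (lowerAt n p a) := by
  have ha : a < p.length := by
    by_contra h
    rw [List.getD_eq_default p 0 (by omega)] at hxa
    omega
  have hbelow (m : ℕ) (hm : m < p.length) : x.getD m 0 ≤ (lowerAt n p a).getD m 0 := by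
    rcases eq_or_ne m a with rfl | hma
    · rw [getD_lowerAt_self hm]; omega
    · rw [getD_lowerAt_of_ne hm hma]; exact hxp.2 m hm
  by_cases hc : a + 1 = p.length ∧ p.getD a 0 = 2 * n - p.length
  · have hxk : p.length < x.length := by
      by_contra h
      have := Hx.le_getD_last
      rw [show x.length = p.length by have := hxp.1; omega, ← hc.1, Nat.add_sub_cancel] at this
      omega
    rw [DomLeB, length_lowerAt_of_pos hc]
    refine ⟨hxk, fun m hm => ?_⟩
    rcases (by omega : m < p.length ∨ m = p.length) with hm | rfl
    · exact hbelow m hm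
    · rw [getD_lowerAt_length hc]
      have := Hx.getD_le hxk
      have := Hx.2.1
      omega
  · rw [DomLeB, length_lowerAt_of_neg hc]
    exact ⟨hxp.1, hbelow⟩

end lowerAt

theorem isJoinB_lowerAt_lowerAt {n i j : ℕ} {p : List ℕ} (hij : i < j) (hj : j < p.length) :
    IsJoinB n (lowerAt n p i) (lowerAt n p j) p := by
  have hlen : (lowerAt n p i).length = p.length := length_lowerAt_of_neg (by omega)
  refine ⟨lowerAt_domLeB, lowerAt_domLeB, fun z _ hiz hjz => ⟨hlen ▸ hiz.1, fun m hm => ?_⟩⟩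
  have hmk : m < p.length := hlen ▸ hiz.1.trans_lt' hm
  rcases eq_or_ne m i with rfl | hmi
  · simpa only [getD_lowerAt_of_ne hmk hij.ne] using hjz.2 m hm
  · simpa only [getD_lowerAt_of_ne hmk hmi] using hiz.2 m hm

namespace IsHeightSeqB

variable {n : ℕ} {p x : List ℕ}

theorem eq_botB_of_forall_not_isAscentB (H : IsHeightSeqB n p) (h : ∀ j, ¬ IsAscentB p j) :
    p = botB n :=
  ((isHeightSeqB_botB (by have := H.1; have := H.2.1; omega)).eq_of_domLeB H H.botB_domLeB
    fun m hm => absurd hm (h m)).symm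

theorem getD_lt_of_domLeB_of_ne (Hx : IsHeightSeqB n x) (Hp : IsHeightSeqB n p)
    (hxp : DomLeB x p) (hne : x ≠ p) {a : ℕ} (ha : a < p.length)
    (hu : ∀ m, IsAscentB p m → m = a) : x.getD a 0 < p.getD a 0 :=
  (hxp.2 a ha).lt_of_ne fun hxa => hne (Hx.eq_of_domLeB Hp hxp fun m hm => hu m hm ▸ hxa)

theorem joinIrredB_of_isAscentB_of_unique (H : IsHeightSeqB n p) {a : ℕ} (ha : IsAscentB p a)
    (hu : ∀ m, IsAscentB p m → m = a) : JoinIrredB n p := by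
  refine ⟨H, fun hmin => ?_, fun x y Hx Hy ⟨hxp, hyp, hleast⟩ => ?_⟩
  · have hn : a < n := by have := H.2.1; have := ha.1; omega
    have := (hmin _ (isHeightSeqB_botB (by omega))).2 a (by rw [length_botB]; exact hn)
    rw [getD_botB hn] at this
    have := ha.2.1
    omega
  · by_contra! hne
    have hxa := Hx.getD_lt_of_domLeB_of_ne H hxp (Ne.symm hne.1) ha.1 hu
    have hya := Hy.getD_lt_of_domLeB_of_ne H hyp (Ne.symm hne.2) ha.1 hu
    exact not_domLeB_lowerAt ha
      (hleast _ (isHeightSeqB_lowerAt H ha) (Hx.domLeB_lowerAt hxp hxa) (Hy.domLeB_lowerAt hyp hya))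

end IsHeightSeqB

namespace JoinIrredB

variable {n : ℕ} {p : List ℕ}

theorem exists_isAscentB (hp : JoinIrredB n p) : ∃ j, IsAscentB p j := by
  by_contra! h
  refine hp.2.1 fun q Hq => ?_
  rw [hp.1.eq_botB_of_forall_not_isAscentB h]
  exact Hq.botB_domLeB

theorem eq_of_isAscentB (hp : JoinIrredB n p) {i j : ℕ} (hi : IsAscentB p i)
    (hj : IsAscentB p j) : i = j := by
  wlog hij : i < j generalizing i j
  · rcases (not_lt.mp hij).lt_or_eq with h | h
    · exact (this hj hi h).symm
    · exact h.symm
  rcases hp.2.2 _ _ (isHeightSeqB_lowerAt hp.1 hi) (isHeightSeqB_lowerAt hp.1 hj)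
      (isJoinB_lowerAt_lowerAt hij hj.1) with h | h
  · exact (not_domLeB_lowerAt hi (by rw [← h]; exact domLeB_refl p)).elim
  · exact (not_domLeB_lowerAt hj (by rw [← h]; exact domLeB_refl p)).elim

end JoinIrredB

theorem joinIrredB_iff_general (n : ℕ) (h : List ℕ) (H : IsHeightSeqB n h) :
    JoinIrredB n h ↔
      ∃! j : ℕ, j < h.length ∧ j + 1 < h.getD j 0 ∧
        (if j = 0 then 0 else h.getD (j - 1) 0) < h.getD j 0 := by
  show JoinIrredB n h ↔ ∃! j, IsAscentB h j
  constructor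
  · intro hp
    obtain ⟨a, ha⟩ := hp.exists_isAscentB
    exact ⟨a, ha, fun b hb => hp.eq_of_isAscentB hb ha⟩
  · rintro ⟨a, ha, hu⟩
    exact H.joinIrredB_of_isAscentB_of_unique ha hu

theorem joinIrredB_iff (n : ℕ) (hn : 0 < n) (h : List ℕ) (H : IsHeightSeqB n h) :
    JoinIrredB n h ↔
      ∃! j : ℕ, j < h.length ∧ j + 1 < h.getD j 0 ∧
        (if j = 0 then 0 else h.getD (j - 1) 0) < h.getD j 0 :=
  joinIrredB_iff_general n h H
end

section
/- For every n > 0, the induced subposet of join-irreducible elements of the lattice D_n^A is order-isomorphic to (T_n^A, ≤), and the induced subposet of join-irreducible elements of the lattice D_n^B is order-isomorphic to (T_n^B, ≤). -/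
/-- `D_n^A` realized as height sequences: functions `h : Fin n → ℕ` that are weakly
increasing and satisfy `i ≤ h i ≤ n` (1-indexed). The order is componentwise. -/
def DyckASet (n : ℕ) : Set (Fin n → ℕ) :=
  {h | Monotone h ∧ ∀ i : Fin n, (i : ℕ) + 1 ≤ h i ∧ h i ≤ n}

/-- `p` is the join (least upper bound) of `x` and `y` in `D_n^A`. -/
def IsJoinA (n : ℕ) (x y p : Fin n → ℕ) : Prop :=
  x ≤ p ∧ y ≤ p ∧ ∀ z ∈ DyckASet n, x ≤ z → y ≤ z → p ≤ z

/-- `p` is join-irreducible in `D_n^A`: `p` lies in `D_n^A`, is not the least element,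
and whenever `p` is the join of two elements, it equals one of them. -/
def JoinIrredA (n : ℕ) (p : Fin n → ℕ) : Prop :=
  p ∈ DyckASet n ∧ ¬(∀ q ∈ DyckASet n, p ≤ q) ∧
    ∀ x y, x ∈ DyckASet n → y ∈ DyckASet n → IsJoinA n x y p → p = x ∨ p = y

/-!
The join-irreducibles are the principal elements `P(i, j)`: the least height sequences whose
`i`-th entry is at least `j`. Joins are entrywise maxima (in type B truncated to the shorter
sequence), so `P(i, j) ≤ x ∨ y` forces `P(i, j) ≤ x` or `P(i, j) ≤ y`; being join-prime,
`P(i, j)` is join-irreducible, and `P(i, j) ≤ P(i', j')` iff `i' ≤ i` and `j ≤ j'`.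
Conversely, let `h` be join-irreducible and `m` the first (0-indexed) position where `h`
exceeds its minimal value `m + 1`. Lowering that entry to `m + 1` gives `y ≠ h` with
`h = P(m + 1, h_m) ∨ y`, so `h = P(m + 1, h_m)`. The one entry of type B that cannot be lowered
is the last entry of a sequence shorter than `n`, and then `h = P(m + 1, h_m)` outright.
-/

section JoinIrreducible

variable {α : Type*}

def IsJoinIn (S : Set α) (le : α → α → Prop) (x y p : α) : Prop :=
  le x p ∧ le y p ∧ ∀ z ∈ S, le x z → le y z → le p z

def JoinIrredIn (S : Set α) (le : α → α → Prop) (p : α) : Prop :=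
  p ∈ S ∧ ¬(∀ q ∈ S, le p q) ∧
    ∀ x y, x ∈ S → y ∈ S → IsJoinIn S le x y p → p = x ∨ p = y

variable {S : Set α} {le : α → α → Prop} {p : α}

theorem JoinIrredIn.of_joinPrime (hp : p ∈ S) (hq : ∃ q ∈ S, ¬le p q)
    (hanti : ∀ x ∈ S, le x p → le p x → x = p)
    (hprime : ∀ x ∈ S, ∀ y ∈ S, ¬le p x → ¬le p y →
      ∃ z ∈ S, le x z ∧ le y z ∧ ¬le p z) :
    JoinIrredIn S le p := by
  refine ⟨hp, fun hbot => ?_, fun x y hx hy ⟨hxp, hyp, hlub⟩ => ?_⟩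
  · obtain ⟨q, hqS, hpq⟩ := hq
    exact hpq (hbot q hqS)
  · by_contra! hne
    obtain ⟨z, hz, hxz, hyz, hpz⟩ := hprime x hx y hy
      (fun h => hne.1 (hanti x hx hxp h).symm) (fun h => hne.2 (hanti y hy hyp h).symm)
    exact hpz (hlub z hz hxz hyz)

theorem JoinIrredIn.eq_of_isJoinIn (hp : JoinIrredIn S le p) {x y : α} (hx : x ∈ S)
    (hy : y ∈ S) (hxy : IsJoinIn S le x y p) (hne : p ≠ y) : p = x :=
  (hp.2.2 x y hx hy hxy).resolve_right hne

end JoinIrreducible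

theorem exists_bijective_of_parametrization {α : Type*} {S : α → Prop} {C : ℕ × ℕ → Prop}
    (R : α → α → Prop) (P : ℕ × ℕ → α) (hPS : ∀ q, C q → S (P q))
    (hSP : ∀ a, S a → ∃ q, C q ∧ P q = a)
    (hR : ∀ q q', C q → C q' → (R (P q) (P q') ↔ q'.1 ≤ q.1 ∧ q.2 ≤ q'.2)) :
    ∃ f : {a // S a} → {q // C q}, Function.Bijective f ∧
      ∀ a b, R a.1 b.1 ↔ ((f b).1.1 ≤ (f a).1.1 ∧ (f a).1.2 ≤ (f b).1.2) := by
  let g : {q // C q} → {a // S a} := fun q => ⟨P q, hPS q q.2⟩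
  have hg : Function.Bijective g := by
    refine ⟨fun q q' hqq' => ?_, fun a => ?_⟩
    · have hPq : P q = P q' := congrArg Subtype.val hqq'
      have hrefl : R (P q) (P q') := hPq ▸ (hR q' q' q'.2 q'.2).2 ⟨le_rfl, le_rfl⟩
      have h := (hR q q' q.2 q'.2).1 hrefl
      have h' := (hR q' q q'.2 q.2).1 (hPq ▸ hrefl)
      exact Subtype.ext (Prod.ext (le_antisymm h'.1 h.1) (le_antisymm h.2 h'.2))
    · obtain ⟨q, hq, hqa⟩ := hSP a.1 a.2
      exact ⟨⟨q, hq⟩, Subtype.ext hqa⟩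
  let e := Equiv.ofBijective g hg
  refine ⟨e.symm, e.symm.bijective, fun a b => ?_⟩
  conv_lhs => rw [← e.apply_symm_apply a, ← e.apply_symm_apply b]
  exact hR _ _ (e.symm a).2 (e.symm b).2

/-- Entry `k` (0-indexed) of the least height sequence whose `i`-th entry (1-indexed) is `≥ j`. -/
def principalHeight (i j k : ℕ) : ℕ := if k + 1 < i then k + 1 else max j (k + 1)

def principalA (n i j : ℕ) : Fin n → ℕ := fun k => principalHeight i j k

theorem joinIrredA_iff {n : ℕ} {p : Fin n → ℕ} :
    JoinIrredA n p ↔ JoinIrredIn (DyckASet n) (· ≤ ·) p :=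
  Iff.rfl

theorem principalA_mem {n i j : ℕ} (hj : j ≤ n) : principalA n i j ∈ DyckASet n := by
  refine ⟨fun a b (hab : (a : ℕ) ≤ b) => ?_, fun k => ?_⟩ <;>
    simp only [principalA, principalHeight] <;> split_ifs <;> omega

theorem succ_mem_dyckASet (n : ℕ) : (fun k : Fin n => (k : ℕ) + 1) ∈ DyckASet n :=
  ⟨fun a b (hab : (a : ℕ) ≤ b) => Nat.succ_le_succ hab, fun k => ⟨le_rfl, k.2⟩⟩

theorem sup_mem_dyckASet {n : ℕ} {x y : Fin n → ℕ} (hx : x ∈ DyckASet n)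
    (hy : y ∈ DyckASet n) : x ⊔ y ∈ DyckASet n :=
  ⟨hx.1.sup hy.1, fun k => ⟨le_sup_of_le_left (hx.2 k).1, sup_le (hx.2 k).2 (hy.2 k).2⟩⟩

theorem principalA_le_iff {n i j : ℕ} {x : Fin n → ℕ} (hx : x ∈ DyckASet n) (hi : 1 ≤ i)
    (hin : i ≤ n) : principalA n i j ≤ x ↔ j ≤ x ⟨i - 1, by omega⟩ := by
  constructor
  · intro h
    have := h ⟨i - 1, by omega⟩
    simp only [principalA, principalHeight] at this
    split_ifs at this <;> omega
  · intro h k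
    have hk := (hx.2 k).1
    simp only [principalA, principalHeight]
    split_ifs with hki
    · exact hk
    · have := hx.1 (show (⟨i - 1, by omega⟩ : Fin n) ≤ k from Fin.mk_le_of_le_val (by omega))
      omega

theorem joinIrredA_principalA {n i j : ℕ} (hi : 1 ≤ i) (hij : i < j) (hj : j ≤ n) :
    JoinIrredA n (principalA n i j) := by
  have hle (x) (hx : x ∈ DyckASet n) := principalA_le_iff (j := j) hx hi (by omega)
  refine joinIrredA_iff.2 <| JoinIrredIn.of_joinPrime (principalA_mem hj)
    ⟨_, succ_mem_dyckASet n, ?_⟩ (fun x _ hxp hpx => le_antisymm hxp hpx)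
    fun x hx y hy hpx hpy => ⟨x ⊔ y, sup_mem_dyckASet hx hy, le_sup_left, le_sup_right, ?_⟩
  · rw [hle _ (succ_mem_dyckASet n)]
    show ¬j ≤ i - 1 + 1
    omega
  · rw [hle x hx] at hpx
    rw [hle y hy] at hpy
    rw [hle _ (sup_mem_dyckASet hx hy), Pi.sup_apply]
    omega

theorem update_mem_dyckASet {n : ℕ} {p : Fin n → ℕ} (hp : p ∈ DyckASet n) {m : Fin n}
    (hm : ∀ k < m, p k ≤ m + 1) : Function.update p m (m + 1) ∈ DyckASet n := by
  refine ⟨fun a b hab => ?_, fun k => ?_⟩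
  · have hpb := (hp.2 b).1
    have hpab := hp.1 hab
    simp only [Function.update_apply]
    split_ifs with ha hb hb
    · exact le_rfl
    · subst ha
      have : (a : ℕ) < b := lt_of_le_of_ne hab (Fin.val_ne_of_ne (Ne.symm hb))
      omega
    · subst hb
      exact hm a (lt_of_le_of_ne hab ha)
    · exact hpab
  · have := hp.2 k
    simp only [Function.update_apply]
    split_ifs with hk
    · subst hk
      omega
    · exact this

theorem isJoinA_principalA_update {n : ℕ} {p : Fin n → ℕ} (hp : p ∈ DyckASet n)
    (m : Fin n) : IsJoinA n (principalA n (m + 1) (p m)) (Function.update p m (m + 1)) p := by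
  have hle (x) (hx : x ∈ DyckASet n) := principalA_le_iff (j := p m) hx (i := m + 1) (by omega)
    (by omega)
  refine ⟨(hle p hp).2 le_rfl, fun k => ?_, fun z hz hpz hyz k => ?_⟩
  · rcases eq_or_ne k m with rfl | hk
    · simpa using (hp.2 k).1
    · simp [hk]
  · rcases eq_or_ne k m with rfl | hk
    · simpa using (hle z hz).1 hpz
    · simpa [hk] using hyz k

theorem exists_principalA_of_joinIrredA {n : ℕ} {p : Fin n → ℕ} (hp : JoinIrredA n p) :
    ∃ q : ℕ × ℕ, (1 ≤ q.1 ∧ q.1 < q.2 ∧ q.2 ≤ n) ∧ principalA n q.1 q.2 = p := by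
  obtain ⟨hpD, hbot, -⟩ := id hp
  have hraised : ∃ k : Fin n, (k : ℕ) + 1 < p k := by
    by_contra! hflat
    exact hbot fun q hq k => (hflat k).trans (hq.2 k).1
  obtain ⟨m, hm : (m : ℕ) + 1 < p m, hmin⟩ :=
    wellFounded_lt.has_min {k : Fin n | (k : ℕ) + 1 < p k} hraised
  have hbefore : ∀ k < m, p k ≤ m + 1 := fun k hk => by
    have hk' : ¬(k : ℕ) + 1 < p k := fun h => hmin k h hk
    have : (k : ℕ) < m := hk
    omega
  refine ⟨((m : ℕ) + 1, p m), ⟨by omega, hm, (hpD.2 m).2⟩, ?_⟩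
  refine (JoinIrredIn.eq_of_isJoinIn (joinIrredA_iff.1 hp) (principalA_mem (hpD.2 m).2)
    (update_mem_dyckASet hpD hbefore) (isJoinA_principalA_update hpD m) fun h => ?_).symm
  have := congrFun h m
  simp only [Function.update_self] at this
  omega

theorem principalA_le_principalA_iff {n i j i' j' : ℕ} (hi : 1 ≤ i) (hij : i < j) (hj : j ≤ n)
    (hj' : j' ≤ n) : principalA n i j ≤ principalA n i' j' ↔ i' ≤ i ∧ j ≤ j' := by
  rw [principalA_le_iff (principalA_mem hj') hi (by omega)]
  simp only [principalA, principalHeight]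
  split_ifs <;> omega

theorem List.getD_map_range (f : ℕ → ℕ) {L k : ℕ} (hk : k < L) :
    ((List.range L).map f).getD k 0 = f k := by
  simp [hk]

theorem List.getD_set_of_lt {l : List ℕ} {m : ℕ} (hm : m < l.length) (k a : ℕ) :
    (l.set m a).getD k 0 = if k = m then a else l.getD k 0 := by
  rcases eq_or_ne k m with rfl | hkm
  · simp [List.getD_eq_getElem?_getD, hm]
  · simp [List.getD_eq_getElem?_getD, hkm, Ne.symm hkm]

theorem DomLeB.antisymm {a b : List ℕ} (hab : DomLeB a b) (hba : DomLeB b a) : a = b := by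
  have hlen : a.length = b.length := le_antisymm hba.1 hab.1
  refine List.ext_getElem hlen fun k ha hb => ?_
  have h1 := hab.2 k hb
  have h2 := hba.2 k ha
  rw [List.getD_eq_getElem _ _ ha, List.getD_eq_getElem _ _ hb] at h1 h2
  exact le_antisymm h1 h2

namespace IsHeightSeqB

variable {n : ℕ} {h : List ℕ}

theorem getD_le_getD_succ_s11 (hh : IsHeightSeqB n h) {k : ℕ} (hk : k + 1 < h.length) :
    h.getD k 0 ≤ h.getD (k + 1) 0 := by
  obtain ⟨-, -, -, hmono, hpen, hlast⟩ := hh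
  rcases lt_or_eq_of_le (show k + 2 ≤ h.length by omega) with hk2 | hk2
  · exact hmono k hk2
  · rw [show h.length - 1 = k + 1 by omega] at hlast
    have := hpen (by omega)
    rw [show h.length - 2 = k by omega] at this
    omega

theorem getD_mono_s11 (hh : IsHeightSeqB n h) {a b : ℕ} (hab : a ≤ b) (hb : b < h.length) :
    h.getD a 0 ≤ h.getD b 0 := by
  induction b, hab using Nat.le_induction with
  | base => exact le_rfl
  | succ b _ ih => exact (ih (by omega)).trans (hh.getD_le_getD_succ_s11 hb)

theorem getD_le_of_lt_pred (hh : IsHeightSeqB n h) {k : ℕ} (hk : k + 1 < h.length) :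
    h.getD k 0 ≤ 2 * n - h.length :=
  (hh.getD_mono_s11 (show k ≤ h.length - 2 by omega) (by omega)).trans (hh.2.2.2.2.1 (by omega))

end IsHeightSeqB

theorem isHeightSeqB_range_succ {n : ℕ} (hn : 0 < n) :
    IsHeightSeqB n ((List.range n).map (· + 1)) := by
  simp only [IsHeightSeqB, List.length_map, List.length_range]
  refine ⟨hn, le_rfl, fun k hk => ?_, fun k hk => ?_, fun _ => ?_, Or.inl ?_⟩ <;>
    (repeat rw [List.getD_map_range _ (by omega)]) <;> omega

/-- `min n (2 * n - j)` is the greatest length allowing an entry `j` before the last one; when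
it is below `i`, the entry `j` is the last one, at position `i`. -/
def principalB (n i j : ℕ) : List ℕ :=
  (List.range (max i (min n (2 * n - j)))).map (principalHeight i j)

theorem length_principalB (n i j : ℕ) :
    (principalB n i j).length = max i (min n (2 * n - j)) := by
  simp [principalB]

theorem principalB_mem {n i j : ℕ} (hi : 1 ≤ i) (hij : i < j) (hj : j ≤ 2 * n + 1 - i) :
    IsHeightSeqB n (principalB n i j) := by
  simp only [IsHeightSeqB, length_principalB]
  refine ⟨by omega, by omega, fun k hk => ?_, fun k hk => ?_, fun _ => ?_, ?_⟩ <;>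
    simp only [principalB] <;> (repeat rw [List.getD_map_range _ (by omega)]) <;>
    simp only [principalHeight] <;> split_ifs <;> omega

theorem principalB_le_iff {n i j : ℕ} {x : List ℕ} (hx : IsHeightSeqB n x) (hi : 1 ≤ i)
    (hij : i < j) :
    DomLeB (principalB n i j) x ↔ x.length < i ∨ j ≤ x.getD (i - 1) 0 := by
  have hlen := length_principalB n i j
  have hget (k) (hkP : k < (principalB n i j).length) :
      (principalB n i j).getD k 0 = principalHeight i j k := by
    rw [hlen] at hkP
    exact List.getD_map_range _ hkP
  constructor
  · rintro ⟨hxP, hent⟩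
    by_contra! h
    have := hent (i - 1) (by omega)
    rw [hget _ (by omega), principalHeight] at this
    split_ifs at this <;> omega
  · intro h
    by_cases hxi : x.length < i
    · refine ⟨by omega, fun k hk => ?_⟩
      rw [hget k (by omega), principalHeight, if_pos (by omega)]
      exact hx.2.2.1 k hk
    replace h := h.resolve_left hxi
    have hxP : x.length ≤ (principalB n i j).length := by
      rw [hlen]
      by_cases hxi' : x.length = i
      · omega
      have := hx.getD_le_of_lt_pred (k := i - 1) (by omega)
      have := hx.2.1
      omega
    refine ⟨hxP, fun k hk => ?_⟩
    rw [hget k (by omega), principalHeight]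
    have hk1 := hx.2.2.1 k hk
    split_ifs
    · exact hk1
    · have := hx.getD_mono_s11 (a := i - 1) (b := k) (by omega) hk
      omega

theorem joinIrredB_iff_s11 {n : ℕ} {p : List ℕ} :
    JoinIrredB n p ↔ JoinIrredIn {h | IsHeightSeqB n h} DomLeB p :=
  Iff.rfl

def supB (x y : List ℕ) : List ℕ :=
  (List.range (min x.length y.length)).map fun k => max (x.getD k 0) (y.getD k 0)

theorem supB_comm (x y : List ℕ) : supB x y = supB y x := by
  simp only [supB, min_comm, max_comm]

theorem domLeB_supB_left (x y : List ℕ) : DomLeB x (supB x y) := by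
  refine ⟨by simp [supB], fun k hk => ?_⟩
  simp only [supB, List.length_map, List.length_range] at hk
  rw [supB, List.getD_map_range _ hk]
  exact le_max_left _ _

theorem isHeightSeqB_supB_of_length_le {n : ℕ} {x y : List ℕ} (hx : IsHeightSeqB n x)
    (hy : IsHeightSeqB n y) (hxy : x.length ≤ y.length) : IsHeightSeqB n (supB x y) := by
  have hlen : (supB x y).length = x.length := by simp [supB, hxy]
  have hget (k) (hk : k < x.length) : (supB x y).getD k 0 = max (x.getD k 0) (y.getD k 0) :=
    List.getD_map_range _ (by omega)
  obtain ⟨hx1, hxn, hxlow, hxmono, hxpen, hxlast⟩ := hx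
  rw [IsHeightSeqB, hlen]
  refine ⟨hx1, hxn, fun k hk => ?_, fun k hk => ?_, fun h2 => ?_, ?_⟩
  · rw [hget k hk]
    exact le_max_of_le_left (hxlow k hk)
  · rw [hget k (by omega), hget (k + 1) (by omega)]
    exact max_le_max (hxmono k hk) (hy.getD_le_getD_succ_s11 (by omega))
  · have hypen : y.getD (x.length - 2) 0 ≤ 2 * n - y.length :=
      hy.getD_le_of_lt_pred (by omega)
    rw [hget _ (by omega)]
    exact max_le (hxpen h2) (hypen.trans (by omega))
  · rw [hget _ (by omega)]
    rcases eq_or_lt_of_le hxy with hxy | hxy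
    · have := hy.2.2.2.2.2
      rw [← hxy] at this
      omega
    · have : y.getD (x.length - 1) 0 ≤ 2 * n - y.length := hy.getD_le_of_lt_pred (by omega)
      omega

theorem isHeightSeqB_supB {n : ℕ} {x y : List ℕ} (hx : IsHeightSeqB n x)
    (hy : IsHeightSeqB n y) : IsHeightSeqB n (supB x y) := by
  rcases le_total x.length y.length with hxy | hyx
  · exact isHeightSeqB_supB_of_length_le hx hy hxy
  · exact supB_comm x y ▸ isHeightSeqB_supB_of_length_le hy hx hyx

theorem joinIrredB_principalB {n i j : ℕ} (hi : 1 ≤ i) (hij : i < j)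
    (hj : j ≤ 2 * n + 1 - i) : JoinIrredB n (principalB n i j) := by
  have hle {x} (hx : IsHeightSeqB n x) := principalB_le_iff hx hi hij
  have hn : 0 < n := by omega
  refine joinIrredB_iff_s11.2 <| JoinIrredIn.of_joinPrime (principalB_mem hi hij hj)
    ⟨_, isHeightSeqB_range_succ hn, ?_⟩ (fun x _ hxp hpx => hxp.antisymm hpx)
    fun x hx y hy hpx hpy => ⟨supB x y, isHeightSeqB_supB hx hy, domLeB_supB_left x y,
      supB_comm x y ▸ domLeB_supB_left y x, ?_⟩
  · rw [hle (isHeightSeqB_range_succ hn), List.getD_map_range _ (by omega)]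
    simp only [List.length_map, List.length_range]
    omega
  · rw [hle hx] at hpx
    rw [hle hy] at hpy
    rw [hle (isHeightSeqB_supB hx hy), supB, List.getD_map_range _ (by omega)]
    simp only [List.length_map, List.length_range]
    omega

theorem isHeightSeqB_set {n : ℕ} {p : List ℕ} (hp : IsHeightSeqB n p) {m : ℕ}
    (hm : m < p.length) (hlast : m + 1 < p.length ∨ p.length = n)
    (hbefore : ∀ k < m, p.getD k 0 ≤ m + 1) : IsHeightSeqB n (p.set m (m + 1)) := by
  obtain ⟨hp1, hpn, hlow, hmono, hpen, hplast⟩ := hp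
  simp only [IsHeightSeqB, List.length_set, List.getD_set_of_lt hm]
  refine ⟨hp1, hpn, fun k hk => ?_, fun k hk => ?_, fun h2 => ?_, ?_⟩
  · have := hlow k hk
    split_ifs <;> omega
  · have := hlow (k + 1) (by omega)
    have := hmono k hk
    have := hbefore k
    split_ifs <;> omega
  · have := hpen h2
    split_ifs <;> omega
  · split_ifs <;> omega

theorem isJoinB_principalB_set {n : ℕ} {p : List ℕ} (hp : IsHeightSeqB n p) {m : ℕ}
    (hm : m < p.length) (hmp : m + 1 < p.getD m 0) :
    IsJoinB n (principalB n (m + 1) (p.getD m 0)) (p.set m (m + 1)) p := by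
  have hle {x} (hx : IsHeightSeqB n x) := principalB_le_iff hx (Nat.le_add_left 1 m) hmp
  refine ⟨(hle hp).2 (.inr le_rfl), ⟨by simp, fun k hk => ?_⟩, fun z hz hPz hyz => ?_⟩
  · rw [List.getD_set_of_lt hm]
    split_ifs with hkm
    · subst hkm; omega
    · exact le_rfl
  · have hzp : z.length ≤ p.length := by simpa using hyz.1
    refine ⟨hzp, fun k hk => ?_⟩
    rcases eq_or_ne k m with rfl | hkm
    · exact ((hle hz).1 hPz).resolve_left (by omega)
    · have := hyz.2 k hk
      rwa [List.getD_set_of_lt hm, if_neg hkm] at this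

theorem principalB_eq_self {n : ℕ} {p : List ℕ} (hp : IsHeightSeqB n p)
    (hbefore : ∀ k < p.length - 1, p.getD k 0 = k + 1) :
    principalB n p.length (p.getD (p.length - 1) 0) = p := by
  obtain ⟨hp1, hpn, -, -, -, hlast⟩ := hp
  have hlen : (principalB n p.length (p.getD (p.length - 1) 0)).length = p.length := by
    rw [length_principalB]
    omega
  refine List.ext_getElem hlen fun k hk hk' => ?_
  rw [← List.getD_eq_getElem _ 0 hk, ← List.getD_eq_getElem _ 0 hk', principalB,
    List.getD_map_range _ (by omega), principalHeight]
  split_ifs with hkL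
  · exact (hbefore k (by omega)).symm
  · rw [show k = p.length - 1 by omega]
    omega

theorem exists_principalB_of_joinIrredB {n : ℕ} {p : List ℕ} (hp : JoinIrredB n p) :
    ∃ q : ℕ × ℕ, (1 ≤ q.1 ∧ q.1 < q.2 ∧ q.2 ≤ 2 * n + 1 - q.1) ∧
      principalB n q.1 q.2 = p := by
  obtain ⟨hpB, hbot, -⟩ := id hp
  obtain ⟨hp1, hpn, hlow, -, -, hlast⟩ := id hpB
  have hraised : ∃ k, k < p.length ∧ k + 1 < p.getD k 0 := by
    by_contra! hflat
    have := hflat (p.length - 1) (by omega)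
    refine hbot fun q hq => ⟨by have := hq.2.1; omega, fun k hk => ?_⟩
    exact (hflat k (by have := hq.2.1; omega)).trans (hq.2.2.1 k hk)
  obtain ⟨m, ⟨hmL, hm⟩, hmin⟩ :=
    wellFounded_lt.has_min {k | k < p.length ∧ k + 1 < p.getD k 0} hraised
  have hbefore : ∀ k < m, p.getD k 0 = k + 1 := fun k hk => by
    have := hlow k (by omega)
    have : ¬k + 1 < p.getD k 0 := fun h => hmin k ⟨by omega, h⟩ hk
    omega
  have hmB : p.getD m 0 ≤ 2 * n + 1 - (m + 1) := by
    have := hpB.getD_mono_s11 (show m ≤ p.length - 1 by omega) (by omega)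
    omega
  have hP := principalB_mem (Nat.le_add_left 1 m) hm hmB
  refine ⟨(m + 1, p.getD m 0), ⟨by omega, hm, hmB⟩, ?_⟩
  by_cases hcase : m + 1 < p.length ∨ p.length = n
  · refine (JoinIrredIn.eq_of_isJoinIn (joinIrredB_iff_s11.1 hp) hP
      (isHeightSeqB_set hpB hmL hcase fun k hk => by have := hbefore k hk; omega)
      (isJoinB_principalB_set hpB hmL hm) fun h => ?_).symm
    have := congrArg (List.getD · m 0) h
    simp only [List.getD_set_of_lt hmL, if_pos] at this
    omega
  · have hLm : m = p.length - 1 := by omega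
    rw [show m + 1 = p.length by omega, hLm]
    exact principalB_eq_self hpB fun k hk => hbefore k (hLm ▸ hk)

theorem principalB_le_principalB_iff {n i j i' j' : ℕ} (hi : 1 ≤ i) (hij : i < j)
    (hj : j ≤ 2 * n + 1 - i) (hi' : 1 ≤ i') (hij' : i' < j') (hj' : j' ≤ 2 * n + 1 - i') :
    DomLeB (principalB n i j) (principalB n i' j') ↔ i' ≤ i ∧ j ≤ j' := by
  rw [principalB_le_iff (principalB_mem hi' hij' hj') hi hij, length_principalB]
  by_cases hin : i - 1 < max i' (min n (2 * n - j'))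
  · rw [principalB, List.getD_map_range _ hin, principalHeight]
    split_ifs <;> omega
  · rw [List.getD_eq_default _ _ (by rw [length_principalB]; omega)]
    omega

theorem joinIrred_posets_iso_general (n : ℕ) :
    (∃ f : {p : Fin n → ℕ // JoinIrredA n p} →
        {q : ℕ × ℕ // 1 ≤ q.1 ∧ q.1 < q.2 ∧ q.2 ≤ n},
      Function.Bijective f ∧
        ∀ a b, a.1 ≤ b.1 ↔ ((f b).1.1 ≤ (f a).1.1 ∧ (f a).1.2 ≤ (f b).1.2)) ∧
    (∃ g : {p : List ℕ // JoinIrredB n p} →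
        {q : ℕ × ℕ // 1 ≤ q.1 ∧ q.1 < q.2 ∧ q.2 ≤ 2 * n + 1 - q.1},
      Function.Bijective g ∧
        ∀ a b, DomLeB a.1 b.1 ↔ ((g b).1.1 ≤ (g a).1.1 ∧ (g a).1.2 ≤ (g b).1.2)) :=
  ⟨exists_bijective_of_parametrization _ (fun q => principalA n q.1 q.2)
      (fun _ hq => joinIrredA_principalA hq.1 hq.2.1 hq.2.2)
      (fun _ hp => exists_principalA_of_joinIrredA hp)
      (fun _ _ hq hq' => principalA_le_principalA_iff hq.1 hq.2.1 hq.2.2 hq'.2.2),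
    exists_bijective_of_parametrization _ (fun q => principalB n q.1 q.2)
      (fun _ hq => joinIrredB_principalB hq.1 hq.2.1 hq.2.2)
      (fun _ hp => exists_principalB_of_joinIrredB hp)
      (fun _ _ hq hq' => principalB_le_principalB_iff hq.1 hq.2.1 hq.2.2 hq'.1 hq'.2.1 hq'.2.2)⟩

theorem joinIrred_posets_iso (n : ℕ) (hn : 0 < n) :
    (∃ f : {p : Fin n → ℕ // JoinIrredA n p} →
        {q : ℕ × ℕ // 1 ≤ q.1 ∧ q.1 < q.2 ∧ q.2 ≤ n},
      Function.Bijective f ∧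
        ∀ a b, a.1 ≤ b.1 ↔ ((f b).1.1 ≤ (f a).1.1 ∧ (f a).1.2 ≤ (f b).1.2)) ∧
    (∃ g : {p : List ℕ // JoinIrredB n p} →
        {q : ℕ × ℕ // 1 ≤ q.1 ∧ q.1 < q.2 ∧ q.2 ≤ 2 * n + 1 - q.1},
      Function.Bijective g ∧
        ∀ a b, DomLeB a.1 b.1 ↔ ((g b).1.1 ≤ (g a).1.1 ∧ (g a).1.2 ≤ (g b).1.2)) :=
  joinIrred_posets_iso_general n
end

section
/- For every n > 0, the lattice D_n^A is isomorphic to the lattice of order ideals (downward-closed subsets, ordered by inclusion) of the poset (T_n^A, ≤), and the lattice D_n^B is isomorphic to the lattice of order ideals of the poset (T_n^B, ≤). -/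
/-- Membership in the triangular poset `T_n^A = {(i,j) : 1 ≤ i < j ≤ n}`. -/
def MemTA (n : ℕ) (q : ℕ × ℕ) : Prop :=
  1 ≤ q.1 ∧ q.1 < q.2 ∧ q.2 ≤ n

/-- Membership in the triangular poset `T_n^B = {(i,j) : 1 ≤ i < j ≤ 2n + 1 - i}`. -/
def MemTB (n : ℕ) (q : ℕ × ℕ) : Prop :=
  1 ≤ q.1 ∧ q.1 < q.2 ∧ q.2 ≤ 2 * n + 1 - q.1

/-- The order on the triangular posets: `(a,b) ≤ (a',b')` iff `a ≥ a'` and `b ≤ b'`. -/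
def TLe (p q : ℕ × ℕ) : Prop :=
  q.1 ≤ p.1 ∧ p.2 ≤ q.2

/-- Order ideals of `T_n^A`: downward-closed subsets. -/
def IsIdealTA (n : ℕ) (I : Set (ℕ × ℕ)) : Prop :=
  (∀ p ∈ I, MemTA n p) ∧ ∀ p ∈ I, ∀ q : ℕ × ℕ, MemTA n q → TLe q p → q ∈ I

/-- Order ideals of `T_n^B`: downward-closed subsets. -/
def IsIdealTB (n : ℕ) (I : Set (ℕ × ℕ)) : Prop :=
  (∀ p ∈ I, MemTB n p) ∧ ∀ p ∈ I, ∀ q : ℕ × ℕ, MemTB n q → TLe q p → q ∈ I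


/-!
Both triangles are staircases `{(i, j) : 1 ≤ i < j ≤ c i}` with an antitone cap `c` (`c = n` in
type A, `c i = 2n + 1 - i` in type B). An order ideal of a staircase is determined by its
profile, the height `g r ≥ r` of its `r`-th row, and the profiles that occur are exactly those
with `g r ≤ max r (c r)` and `min (g r) (c (r + 1)) ≤ g (r + 1)`; inclusion of ideals is the
pointwise order of profiles. A type-A height sequence is such a profile. A type-B height
sequence of length `k` is the beginning of a profile whose rows after `k` are full, and `k` is
recovered from the profile as the first row `r` with `2n - r ≤ g r`.
-/

def MemStaircase (c : ℕ → ℕ) (q : ℕ × ℕ) : Prop :=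
  1 ≤ q.1 ∧ q.1 < q.2 ∧ q.2 ≤ c q.1

def IsStaircaseIdeal (c : ℕ → ℕ) (I : Set (ℕ × ℕ)) : Prop :=
  (∀ p ∈ I, MemStaircase c p) ∧ ∀ p ∈ I, ∀ q, MemStaircase c q → TLe q p → q ∈ I

structure IsStaircaseProfile (c g : ℕ → ℕ) : Prop where
  le_self : ∀ r, 1 ≤ r → r ≤ g r
  le_max_cap : ∀ r, 1 ≤ r → g r ≤ max r (c r)
  min_cap_le_succ : ∀ r, 1 ≤ r → min (g r) (c (r + 1)) ≤ g (r + 1)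

def belowProfile (c g : ℕ → ℕ) : Set (ℕ × ℕ) :=
  {q | MemStaircase c q ∧ q.2 ≤ g q.1}

section Staircase

variable {c g g' : ℕ → ℕ}

theorem IsStaircaseProfile.min_le_of_le (hc : Antitone c) (hg : IsStaircaseProfile c g)
    {r s : ℕ} (hr : 1 ≤ r) (hrs : r ≤ s) : min (g r) (c s) ≤ g s := by
  induction s, hrs using Nat.le_induction with
  | base => exact min_le_left _ _
  | succ s hrs ih =>
    calc min (g r) (c (s + 1)) ≤ min (min (g r) (c s)) (c (s + 1)) :=
          le_min (le_min (min_le_left _ _) ((min_le_right _ _).trans (hc s.le_succ)))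
            (min_le_right _ _)
      _ ≤ min (g s) (c (s + 1)) := min_le_min_right _ ih
      _ ≤ g (s + 1) := hg.min_cap_le_succ s (hr.trans hrs)

theorem IsStaircaseProfile.eq_max_cap_of_cap_succ_le (hc : Antitone c)
    (hg : IsStaircaseProfile c g) {r s : ℕ} (hr : 1 ≤ r) (hfull : c (r + 1) ≤ g r) (hrs : r < s) :
    g s = max s (c s) := by
  have hcs : c s ≤ g s := by
    have := hg.min_le_of_le hc hr hrs.le
    have : c s ≤ c (r + 1) := hc hrs
    omega
  exact le_antisymm (hg.le_max_cap s (by omega)) (max_le (hg.le_self s (by omega)) hcs)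

theorem belowProfile_isStaircaseIdeal (hc : Antitone c) (hg : IsStaircaseProfile c g) :
    IsStaircaseIdeal c (belowProfile c g) := by
  refine ⟨fun p hp => hp.1, ?_⟩
  rintro p ⟨hp, hpg⟩ q hq ⟨hqp1, hqp2⟩
  refine ⟨hq, ?_⟩
  have := hg.min_le_of_le hc hp.1 hqp1
  have := hq.2.2
  omega

theorem belowProfile_subset_belowProfile_iff (hg : ∀ r, 1 ≤ r → g r ≤ max r (c r))
    (hg' : ∀ r, 1 ≤ r → r ≤ g' r) :
    belowProfile c g ⊆ belowProfile c g' ↔ ∀ r, 1 ≤ r → g r ≤ g' r := by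
  refine ⟨fun hsub r hr => ?_, fun hle q ⟨hq, hqg⟩ => ⟨hq, hqg.trans (hle q.1 hq.1)⟩⟩
  by_cases hgr : g r ≤ r
  · exact hgr.trans (hg' r hr)
  · have hcap : g r ≤ c r := by have := hg r hr; omega
    have hmem : (r, g r) ∈ belowProfile c g := ⟨⟨hr, by omega, hcap⟩, le_rfl⟩
    exact (hsub hmem).2

theorem belowProfile_congr (h : ∀ r, 1 ≤ r → g r = g' r) :
    belowProfile c g = belowProfile c g' := by
  ext q
  exact and_congr_right fun hq => by rw [h q.1 hq.1]

/-- Inserting `r` makes an empty row have height `r` and the supremum always attained. -/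
noncomputable def rowTop (I : Set (ℕ × ℕ)) (r : ℕ) : ℕ :=
  sSup (insert r {b | (r, b) ∈ I})

variable {I : Set (ℕ × ℕ)}

theorem max_cap_mem_upperBounds_row (hI : IsStaircaseIdeal c I) (r : ℕ) :
    max r (c r) ∈ upperBounds (insert r {b | (r, b) ∈ I}) := by
  rintro b (rfl | hb)
  · exact le_max_left _ _
  · exact (hI.1 _ hb).2.2.trans (le_max_right _ _)

theorem bddAbove_row (hI : IsStaircaseIdeal c I) (r : ℕ) :
    BddAbove (insert r {b | (r, b) ∈ I}) :=
  ⟨_, max_cap_mem_upperBounds_row hI r⟩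

theorem mem_iff_le_rowTop (hI : IsStaircaseIdeal c I) {r b : ℕ} :
    (r, b) ∈ I ↔ MemStaircase c (r, b) ∧ b ≤ rowTop I r := by
  refine ⟨fun h => ⟨hI.1 _ h, le_csSup (bddAbove_row hI r) (Or.inr h)⟩, fun ⟨hq, hb⟩ => ?_⟩
  rcases Nat.sSup_mem (Set.insert_nonempty _ _) (bddAbove_row hI r) with htop | htop
  · have := hq.2.1
    rw [rowTop, htop] at hb
    omega
  · exact hI.2 _ htop _ hq ⟨le_rfl, hb⟩

theorem belowProfile_rowTop (hI : IsStaircaseIdeal c I) : belowProfile c (rowTop I) = I := by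
  ext ⟨r, b⟩
  exact (mem_iff_le_rowTop hI).symm

theorem isStaircaseProfile_rowTop (hI : IsStaircaseIdeal c I) :
    IsStaircaseProfile c (rowTop I) where
  le_self r _ := le_csSup (bddAbove_row hI r) (Set.mem_insert _ _)
  le_max_cap r _ := csSup_le' (max_cap_mem_upperBounds_row hI r)
  min_cap_le_succ r hr := by
    have hself : r + 1 ≤ rowTop I (r + 1) := le_csSup (bddAbove_row hI _) (Set.mem_insert _ _)
    by_cases hm : min (rowTop I r) (c (r + 1)) ≤ r + 1
    · exact hm.trans hself
    have hcap : rowTop I r ≤ c r := by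
      have := csSup_le' (max_cap_mem_upperBounds_row hI r)
      rw [← rowTop] at this
      omega
    have htop : (r, rowTop I r) ∈ I := (mem_iff_le_rowTop hI).2 ⟨⟨hr, by omega, hcap⟩, le_rfl⟩
    have hnext : (r + 1, min (rowTop I r) (c (r + 1))) ∈ I :=
      hI.2 _ htop _ ⟨by omega, by omega, min_le_right _ _⟩ ⟨r.le_succ, min_le_left _ _⟩
    exact ((mem_iff_le_rowTop hI).1 hnext).2

end Staircase

theorem exists_bijective_staircaseIdeal_of_profile {α : Type*} {P : α → Prop}
    {R : α → α → Prop} {c : ℕ → ℕ} (hc : Antitone c) (φ : α → ℕ → ℕ)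
    (hφ : ∀ a, P a → IsStaircaseProfile c (φ a))
    (hR : ∀ a b, P a → P b → (R a b ↔ ∀ r, 1 ≤ r → φ a r ≤ φ b r))
    (hR_antisymm : ∀ a b, P a → P b → R a b → R b a → a = b)
    (hφ_surj : ∀ g, IsStaircaseProfile c g → ∃ a, P a ∧ ∀ r, 1 ≤ r → φ a r = g r) :
    ∃ f : {a // P a} → {I : Set (ℕ × ℕ) // IsStaircaseIdeal c I},
      Function.Bijective f ∧ ∀ a b, R a.1 b.1 ↔ (f a).1 ⊆ (f b).1 := by
  let f : {a // P a} → {I : Set (ℕ × ℕ) // IsStaircaseIdeal c I} := fun a =>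
    ⟨belowProfile c (φ a), belowProfile_isStaircaseIdeal hc (hφ a a.2)⟩
  have hf : ∀ a b, R a.1 b.1 ↔ (f a).1 ⊆ (f b).1 := fun a b => by
    rw [hR a b a.2 b.2, belowProfile_subset_belowProfile_iff (hφ a a.2).le_max_cap
      (hφ b b.2).le_self]
  refine ⟨f, ⟨fun a b hab => ?_, fun I => ?_⟩, hf⟩
  · exact Subtype.ext <| hR_antisymm a b a.2 b.2 ((hf a b).2 (hab ▸ subset_rfl))
      ((hf b a).2 (hab ▸ subset_rfl))
  · obtain ⟨a, ha, hφa⟩ := hφ_surj _ (isStaircaseProfile_rowTop I.2)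
    exact ⟨⟨a, ha⟩, Subtype.ext <| (belowProfile_congr hφa).trans (belowProfile_rowTop I.2)⟩

def padFull (c : ℕ → ℕ) (l : List ℕ) (r : ℕ) : ℕ :=
  l.getD (r - 1) (max r (c r))

theorem padFull_succ_of_lt_length {c : ℕ → ℕ} {l : List ℕ} {i : ℕ} (hi : i < l.length) :
    padFull c l (i + 1) = l.getD i 0 := by
  rw [padFull, Nat.add_sub_cancel, List.getD_eq_getElem _ _ hi, List.getD_eq_getElem _ _ hi]

theorem padFull_of_length_lt {c : ℕ → ℕ} {l : List ℕ} {r : ℕ} (hr : l.length < r) :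
    padFull c l r = max r (c r) :=
  List.getD_eq_default _ _ (by omega)

theorem padFull_cases (c : ℕ → ℕ) (l : List ℕ) {r : ℕ} (hr : 1 ≤ r) :
    (∃ i < l.length, r = i + 1 ∧ padFull c l r = l.getD i 0) ∨
      (l.length < r ∧ padFull c l r = max r (c r)) := by
  by_cases hrl : r ≤ l.length
  · obtain ⟨i, rfl⟩ : ∃ i, r = i + 1 := ⟨r - 1, by omega⟩
    exact Or.inl ⟨i, by omega, rfl, padFull_succ_of_lt_length (by omega)⟩
  · exact Or.inr ⟨by omega, padFull_of_length_lt (by omega)⟩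

section TypeA

variable {n : ℕ}

theorem padFull_ofFn_succ (c : ℕ → ℕ) (h : Fin n → ℕ) (i : Fin n) :
    padFull c (List.ofFn h) (i + 1) = h i := by
  rw [padFull_succ_of_lt_length (by simp), List.getD_eq_getElem _ _ (by simp), List.getElem_ofFn]

theorem padFull_ofFn_cases (c : ℕ → ℕ) (h : Fin n → ℕ) {r : ℕ} (hr : 1 ≤ r) :
    (∃ i : Fin n, r = i + 1 ∧ padFull c (List.ofFn h) r = h i) ∨
      (n < r ∧ padFull c (List.ofFn h) r = max r (c r)) := by
  rcases padFull_cases c (List.ofFn h) hr with ⟨i, hi, rfl, -⟩ | ⟨hlt, hpad⟩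
  · rw [List.length_ofFn] at hi
    exact Or.inl ⟨⟨i, hi⟩, rfl, padFull_ofFn_succ c h ⟨i, hi⟩⟩
  · exact Or.inr ⟨by rwa [List.length_ofFn] at hlt, hpad⟩

theorem isStaircaseProfile_padFull_of_mem_dyckASet {h : Fin n → ℕ} (hh : h ∈ DyckASet n) :
    IsStaircaseProfile (fun _ => n) (padFull (fun _ => n) (List.ofFn h)) where
  le_self r hr := by
    rcases padFull_ofFn_cases (fun _ => n) h hr with ⟨i, rfl, hi⟩ | ⟨_, hr'⟩
    · exact hi ▸ (hh.2 i).1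
    · exact hr' ▸ le_max_left _ _
  le_max_cap r hr := by
    rcases padFull_ofFn_cases (fun _ => n) h hr with ⟨i, rfl, hi⟩ | ⟨_, hr'⟩
    · exact hi ▸ (hh.2 i).2.trans (le_max_right _ _)
    · exact hr'.le
  min_cap_le_succ r hr := by
    by_cases hrn : r < n
    · have hcur := padFull_ofFn_succ (fun _ => n) h ⟨r - 1, by omega⟩
      have hnext := padFull_ofFn_succ (fun _ => n) h ⟨r, hrn⟩
      rw [Fin.val_mk, Nat.sub_add_cancel hr] at hcur
      rw [hcur, hnext]
      exact (min_le_left _ _).trans (hh.1 (Fin.mk_le_mk.2 (Nat.sub_le r 1)))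
    · rw [padFull_of_length_lt (r := r + 1) (by rw [List.length_ofFn]; omega)]
      exact (min_le_right _ _).trans (le_max_right _ _)

theorem le_iff_padFull_ofFn_le (c : ℕ → ℕ) {a b : Fin n → ℕ} :
    a ≤ b ↔ ∀ r, 1 ≤ r → padFull c (List.ofFn a) r ≤ padFull c (List.ofFn b) r := by
  refine ⟨fun hab r hr => ?_, fun hab i => ?_⟩
  · rcases padFull_ofFn_cases c a hr with ⟨i, rfl, hai⟩ | ⟨hnr, har⟩
    · rw [hai, padFull_ofFn_succ]
      exact hab i
    · rw [har, padFull_of_length_lt (by rwa [List.length_ofFn])]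
  · simpa only [padFull_ofFn_succ] using hab (i + 1) (by omega)

theorem IsStaircaseProfile.exists_mem_dyckASet {g : ℕ → ℕ}
    (hg : IsStaircaseProfile (fun _ => n) g) :
    ∃ h ∈ DyckASet n, ∀ r, 1 ≤ r → padFull (fun _ => n) (List.ofFn h) r = g r := by
  have hmono : MonotoneOn g {r | 1 ≤ r} := monotoneOn_nat_Ici_of_le_succ fun r hr => by
    have := hg.min_cap_le_succ r hr
    have := hg.le_max_cap r hr
    have := hg.le_self (r + 1) (by omega)
    omega
  refine ⟨fun i : Fin n => g (i + 1),
    ⟨fun i j hij => hmono (by simp) (by simp) (by simpa using hij),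
      fun i => ⟨hg.le_self _ (by omega), ?_⟩⟩, fun r hr => ?_⟩
  · simpa [i.isLt.le] using hg.le_max_cap (i + 1) (by omega)
  · rcases padFull_ofFn_cases (fun _ => n) (fun i : Fin n => g (i + 1)) hr
      with ⟨i, rfl, hi⟩ | ⟨hnr, hr'⟩
    · exact hi
    · have := hg.le_self r hr
      have := hg.le_max_cap r hr
      rw [hr']
      omega

end TypeA

def capB (n i : ℕ) : ℕ := 2 * n + 1 - i

theorem capB_antitone (n : ℕ) : Antitone (capB n) := fun _ _ h => Nat.sub_le_sub_left h _

namespace IsHeightSeqB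

variable {n : ℕ} {l : List ℕ} (hl : IsHeightSeqB n l)
include hl

theorem getD_le_getD_succ_s12 {i : ℕ} (hi : i + 1 < l.length) : l.getD i 0 ≤ l.getD (i + 1) 0 := by
  obtain ⟨-, -, -, hmono, hpen, hlast⟩ := hl
  rcases (show i + 2 ≤ l.length by omega).lt_or_eq with hlt | heq
  · exact hmono i hlt
  · have := hpen (by omega)
    rw [show l.length - 2 = i by omega] at this
    rw [show l.length - 1 = i + 1 by omega] at hlast
    omega

theorem getD_mono_s12 {i j : ℕ} (hij : i ≤ j) (hj : j < l.length) : l.getD i 0 ≤ l.getD j 0 := by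
  induction j, hij using Nat.le_induction with
  | base => exact le_rfl
  | succ j _ ih => exact (ih (by omega)).trans (hl.getD_le_getD_succ_s12 hj)

theorem getD_le_two_mul_sub_s12 {i : ℕ} (hi : i < l.length) : l.getD i 0 ≤ 2 * n - i := by
  have hlast := hl.2.2.2.2.2
  rcases (show i + 1 ≤ l.length by omega).lt_or_eq with hlt | heq
  · have := hl.2.2.2.2.1 (by omega)
    have := hl.getD_mono_s12 (show i ≤ l.length - 2 by omega) (by omega)
    omega
  · rw [show l.length - 1 = i by omega] at hlast
    have := hl.2.1
    omega

theorem isStaircaseProfile_padFull : IsStaircaseProfile (capB n) (padFull (capB n) l) where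
  le_self r hr := by
    rcases padFull_cases (capB n) l hr with ⟨i, hi, rfl, hpad⟩ | ⟨_, hpad⟩
    · exact hpad ▸ hl.2.2.1 i hi
    · exact hpad ▸ le_max_left _ _
  le_max_cap r hr := by
    rcases padFull_cases (capB n) l hr with ⟨i, hi, rfl, hpad⟩ | ⟨_, hpad⟩
    · have := hl.getD_le_two_mul_sub_s12 hi
      rw [hpad, capB]
      omega
    · exact hpad.le
  min_cap_le_succ r hr := by
    by_cases hrl : r < l.length
    · obtain ⟨i, rfl⟩ : ∃ i, r = i + 1 := ⟨r - 1, by omega⟩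
      rw [padFull_succ_of_lt_length (by omega), padFull_succ_of_lt_length hrl]
      exact (min_le_left _ _).trans (hl.getD_le_getD_succ_s12 hrl)
    · rw [padFull_of_length_lt (r := r + 1) (by omega)]
      exact (min_le_right _ _).trans (le_max_right _ _)

end IsHeightSeqB

theorem domLeB_iff_padFull_le {n : ℕ} {a b : List ℕ} (ha : IsHeightSeqB n a)
    (hb : IsHeightSeqB n b) :
    DomLeB a b ↔ ∀ r, 1 ≤ r → padFull (capB n) a r ≤ padFull (capB n) b r := by
  refine ⟨fun ⟨hlen, hval⟩ r hr => ?_, fun hle => ?_⟩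
  · rcases padFull_cases (capB n) b hr with ⟨j, hj, rfl, hpad⟩ | ⟨_, hpad⟩
    · rw [hpad, padFull_succ_of_lt_length (by omega)]
      exact hval j hj
    · exact hpad ▸ ha.isStaircaseProfile_padFull.le_max_cap r hr
  have hlen : b.length ≤ a.length := by
    by_contra! hlt
    obtain ⟨i, hi⟩ : ∃ i, a.length = i + 1 := ⟨a.length - 1, by have := ha.1; omega⟩
    have hab := hle (i + 1) (by omega)
    rw [padFull_succ_of_lt_length (l := a) (by omega),
      padFull_succ_of_lt_length (l := b) (by omega)] at hab
    have hlast := ha.2.2.2.2.2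
    rw [hi, Nat.add_sub_cancel] at hlast
    have := hb.2.2.2.2.1 (by omega)
    have := hb.getD_mono_s12 (show i ≤ b.length - 2 by omega) (by omega)
    have := hb.2.1
    omega
  refine ⟨hlen, fun j hj => ?_⟩
  have := hle (j + 1) (by omega)
  rwa [padFull_succ_of_lt_length (by omega), padFull_succ_of_lt_length hj] at this

namespace IsStaircaseProfile

variable {n : ℕ} {g : ℕ → ℕ} (hg : IsStaircaseProfile (capB n) g)
include hg

theorem isHeightSeqB_ofFn {k : ℕ} (hk : 1 ≤ k) (hkn : k ≤ n) (hfull : 2 * n - k ≤ g k)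
    (hlow : ∀ r, 1 ≤ r → r < k → g r < 2 * n - r) :
    IsHeightSeqB n (List.ofFn fun i : Fin k => g (i + 1)) := by
  have hlen : (List.ofFn fun i : Fin k => g (i + 1)).length = k := List.length_ofFn
  have hget : ∀ i < k, (List.ofFn fun i : Fin k => g (i + 1)).getD i 0 = g (i + 1) :=
    fun i hi => by simp [hi]
  have hcap := hg.le_max_cap
  simp only [capB] at hcap
  refine ⟨?_, ?_, fun i hi => ?_, fun i hi => ?_, fun h2 => ?_, ?_⟩ <;> rw [hlen] at *
  · exact hk
  · exact hkn
  · exact hget i hi ▸ hg.le_self _ (by omega)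
  · rw [hget i (by omega), hget (i + 1) (by omega)]
    have := hg.min_cap_le_succ (i + 1) (by omega)
    have := hlow (i + 1) (by omega) (by omega)
    simp only [capB] at *
    omega
  · rw [hget _ (by omega), show k - 2 + 1 = k - 1 by omega]
    have := hlow (k - 1) (by omega) (by omega)
    omega
  · rw [hget _ (by omega), Nat.sub_add_cancel hk]
    have := hcap k hk
    omega

theorem exists_isHeightSeqB (hn : 0 < n) :
    ∃ l, IsHeightSeqB n l ∧ ∀ r, 1 ≤ r → padFull (capB n) l r = g r := by
  classical
  have hex : ∃ k, 1 ≤ k ∧ 2 * n - k ≤ g k := ⟨n, hn, by have := hg.le_self n hn; omega⟩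
  obtain ⟨k, ⟨hk, hfull⟩, hmin⟩ : ∃ k, (1 ≤ k ∧ 2 * n - k ≤ g k) ∧
      ∀ r < k, ¬(1 ≤ r ∧ 2 * n - r ≤ g r) :=
    ⟨Nat.find hex, Nat.find_spec hex, fun r => Nat.find_min hex⟩
  have hkn : k ≤ n := by
    by_contra! hnk
    exact hmin n hnk ⟨hn, by have := hg.le_self n hn; omega⟩
  have hlow : ∀ r, 1 ≤ r → r < k → g r < 2 * n - r := fun r hr hrk => by
    have := hmin r hrk
    omega
  refine ⟨_, hg.isHeightSeqB_ofFn hk hkn hfull hlow, fun r hr => ?_⟩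
  rcases padFull_cases (capB n) _ hr with ⟨i, hi, rfl, hpad⟩ | ⟨hlt, hpad⟩
  · rw [List.length_ofFn] at hi
    rw [hpad]
    simp [hi]
  · rw [List.length_ofFn] at hlt
    have hfull' : capB n (k + 1) ≤ g k := by
      simp only [capB]
      omega
    rw [hpad, hg.eq_max_cap_of_cap_succ_le (capB_antitone n) hk hfull' hlt]

end IsStaircaseProfile

theorem dyck_lattices_iso_ideals (n : ℕ) (hn : 0 < n) :
    (∃ f : {h : Fin n → ℕ // h ∈ DyckASet n} → {I : Set (ℕ × ℕ) // IsIdealTA n I},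
      Function.Bijective f ∧ ∀ a b, a.1 ≤ b.1 ↔ (f a).1 ⊆ (f b).1) ∧
    (∃ g : {h : List ℕ // IsHeightSeqB n h} → {I : Set (ℕ × ℕ) // IsIdealTB n I},
      Function.Bijective g ∧ ∀ a b, DomLeB a.1 b.1 ↔ (g a).1 ⊆ (g b).1) :=
  ⟨exists_bijective_staircaseIdeal_of_profile antitone_const
      (fun h => padFull (fun _ => n) (List.ofFn h))
      (fun _ hh => isStaircaseProfile_padFull_of_mem_dyckASet hh)
      (fun _ _ _ _ => le_iff_padFull_ofFn_le _)
      (fun _ _ _ _ => le_antisymm)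
      (fun _ hg => hg.exists_mem_dyckASet),
    exists_bijective_staircaseIdeal_of_profile (capB_antitone n) (padFull (capB n))
      (fun _ hl => hl.isStaircaseProfile_padFull)
      (fun _ _ => domLeB_iff_padFull_le)
      (fun _ _ _ _ => DomLeB.antisymm)
      (fun _ hg => hg.exists_isHeightSeqB hn)⟩
end

section
/- Let h^(1) = (h^(1)_1,…,h^(1)_n) and h^(2) = (h^(2)_1,…,h^(2)_n) be elements of L_{n,m}. Define the sequence h = (h_1,…,h_n) recursively from the right by: h_n = m if h^(1)_n ≤ h^(2)_n and h_n = h^(2)_n otherwise; and for i < n, h_i = h_{i+1} if h^(1)_i ≤ h^(2)_i and h_i = h^(2)_i otherwise. Then h ∈ L_{n,m}, and h is the relative pseudocomplement of h^(1) with respect to h^(2), i.e., h is the greatest element z of L_{n,m} such that min{h^(1)_i, z_i} ≤ h^(2)_i for all i ∈ [n]. -/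
/-!
Read from the right, `h` copies its right neighbour (`m` past the end) where `h1 ≤ h2` and
equals `h2` where `h1 > h2`. At the latter positions any admissible `z` satisfies `z ≤ h2 = h`;
at the former the constraint is vacuous and `z ≤ h` propagates from the right through the
monotonicity of `z`. Monotonicity of `h2` gives `h2 ≤ h`, which in turn makes `h` monotone.
-/

/-- `L_{n,m}`: weakly increasing sequences `h : Fin n → ℕ` with all entries at most `m`,
under the componentwise (dominance) order. -/
def LPathSet (n m : ℕ) : Set (Fin n → ℕ) :=
  {h | Monotone h ∧ ∀ i, h i ≤ m}

def IsPseudocomplRecursion {α : Type*} [LinearOrder α] {k : ℕ} (m : α)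
    (h1 h2 h : Fin (k + 1) → α) : Prop :=
  h (Fin.last k) = (if h1 (Fin.last k) ≤ h2 (Fin.last k) then m else h2 (Fin.last k)) ∧
    ∀ i : Fin k, h i.castSucc =
      if h1 i.castSucc ≤ h2 i.castSucc then h i.succ else h2 i.castSucc

namespace IsPseudocomplRecursion

variable {α : Type*} [LinearOrder α] {k : ℕ} {m : α} {h1 h2 h : Fin (k + 1) → α}

theorem eq_of_not_le (hr : IsPseudocomplRecursion m h1 h2 h) {i : Fin (k + 1)}
    (hi : ¬ h1 i ≤ h2 i) : h i = h2 i := by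
  cases i using Fin.lastCases with
  | last => rw [hr.1, if_neg hi]
  | cast i => rw [hr.2 i, if_neg hi]

theorem min_le (hr : IsPseudocomplRecursion m h1 h2 h) (i : Fin (k + 1)) :
    min (h1 i) (h i) ≤ h2 i := by
  by_cases hi : h1 i ≤ h2 i
  · exact min_le_of_left_le hi
  · exact min_le_of_right_le (hr.eq_of_not_le hi).le

theorem le_bound (hr : IsPseudocomplRecursion m h1 h2 h) (h2m : ∀ i, h2 i ≤ m)
    (i : Fin (k + 1)) : h i ≤ m := by
  induction i using Fin.reverseInduction with
  | last => rw [hr.1]; split_ifs <;> simp [h2m]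
  | cast i ih => rw [hr.2 i]; split_ifs <;> simp [ih, h2m]

theorem right_le (hr : IsPseudocomplRecursion m h1 h2 h) (h2mono : Monotone h2)
    (h2m : ∀ i, h2 i ≤ m) : h2 ≤ h := by
  intro i
  induction i using Fin.reverseInduction with
  | last => rw [hr.1]; split_ifs <;> simp [h2m]
  | cast i ih =>
    rw [hr.2 i]
    split_ifs
    · exact (h2mono (Fin.castSucc_le_succ i)).trans ih
    · exact le_rfl

theorem monotone (hr : IsPseudocomplRecursion m h1 h2 h) (h2mono : Monotone h2)
    (h2m : ∀ i, h2 i ≤ m) : Monotone h := by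
  refine Fin.monotone_iff_le_succ.2 fun i => ?_
  rw [hr.2 i]
  split_ifs
  · exact le_rfl
  · exact (h2mono (Fin.castSucc_le_succ i)).trans (hr.right_le h2mono h2m i.succ)

theorem le_of_min_le (hr : IsPseudocomplRecursion m h1 h2 h) {z : Fin (k + 1) → α}
    (zmono : Monotone z) (zm : ∀ i, z i ≤ m) (hz : ∀ i, min (h1 i) (z i) ≤ h2 i) : z ≤ h := by
  have le_h2 : ∀ i, ¬ h1 i ≤ h2 i → z i ≤ h2 i := fun i hi =>
    (min_le_iff.1 (hz i)).resolve_left hi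
  intro i
  induction i using Fin.reverseInduction with
  | last =>
    rw [hr.1]
    split_ifs with hi
    · exact zm _
    · exact le_h2 _ hi
  | cast i ih =>
    rw [hr.2 i]
    split_ifs with hi
    · exact (zmono (Fin.castSucc_le_succ i)).trans ih
    · exact le_h2 _ hi

end IsPseudocomplRecursion

theorem rel_pseudocomplement_paths_general (n m : ℕ) (h1 h2 h : Fin n → ℕ)
    (H2 : h2 ∈ LPathSet n m)
    -- the recursive definition of `h` from the right:
    (hlast : ∀ i : Fin n, (i : ℕ) + 1 = n →
      h i = if h1 i ≤ h2 i then m else h2 i)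
    (hrec : ∀ i : Fin n, ∀ hi : (i : ℕ) + 1 < n,
      h i = if h1 i ≤ h2 i then h ⟨(i : ℕ) + 1, hi⟩ else h2 i) :
    h ∈ LPathSet n m ∧
    (∀ i, min (h1 i) (h i) ≤ h2 i) ∧
    (∀ z ∈ LPathSet n m, (∀ i, min (h1 i) (z i) ≤ h2 i) → z ≤ h) := by
  obtain _ | k := n
  · exact ⟨⟨fun i => i.elim0, fun i => i.elim0⟩, fun i => i.elim0, fun _ _ _ i => i.elim0⟩
  obtain ⟨h2mono, h2m⟩ := H2
  have hr : IsPseudocomplRecursion m h1 h2 h :=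
    ⟨hlast _ (Fin.val_last k ▸ rfl), fun i => hrec i.castSucc (by simp)⟩
  exact ⟨⟨hr.monotone h2mono h2m, hr.le_bound h2m⟩, hr.min_le,
    fun z ⟨zmono, zm⟩ => hr.le_of_min_le zmono zm⟩

theorem rel_pseudocomplement_paths (n m : ℕ) (h1 h2 h : Fin n → ℕ)
    (H1 : h1 ∈ LPathSet n m) (H2 : h2 ∈ LPathSet n m)
    -- the recursive definition of `h` from the right:
    (hlast : ∀ i : Fin n, (i : ℕ) + 1 = n →
      h i = if h1 i ≤ h2 i then m else h2 i)
    (hrec : ∀ i : Fin n, ∀ hi : (i : ℕ) + 1 < n,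
      h i = if h1 i ≤ h2 i then h ⟨(i : ℕ) + 1, hi⟩ else h2 i) :
    h ∈ LPathSet n m ∧
    (∀ i, min (h1 i) (h i) ≤ h2 i) ∧
    (∀ z ∈ LPathSet n m, (∀ i, min (h1 i) (z i) ≤ h2 i) → z ≤ h) :=
  rel_pseudocomplement_paths_general n m h1 h2 h H2 hlast hrec
end

section
/- An element h of L_{n,m} is regular, i.e., (h^c)^c = h where h^c denotes the pseudocomplement of h, if and only if h is the least element (0,…,0) or the greatest element (m,…,m) of L_{n,m}. -/
/-- `z` is the pseudocomplement of `x` in `L_{n,m}`: `z` is the greatest element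
of `L_{n,m}` with `x ∧ z ≤ 0`, i.e. `min (x i) (z i) ≤ 0` for all `i`
(the least element being the constant sequence `0`). -/
def IsPseudocomplementL (n m : ℕ) (x z : Fin n → ℕ) : Prop :=
  z ∈ LPathSet n m ∧ (∀ i, min (x i) (z i) ≤ 0) ∧
    ∀ w ∈ LPathSet n m, (∀ i, min (x i) (w i) ≤ 0) → w ≤ z

/-!
The pseudocomplement of `0` is the top element, that of the top element is `0`, and every
nonzero `h` has pseudocomplement `0`: if `h k > 0`, then any `z` with `h ∧ z = 0` vanishes from `k` on,
hence everywhere by monotonicity. So `h^{cc}` is `h` for `h = 0`, and the top element otherwise.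
-/

namespace IsPseudocomplementL

variable {n m : ℕ} {x z : Fin n → ℕ}

theorem eq_top_of_eq_zero (hx : x = fun _ => 0) (hz : IsPseudocomplementL n m x z) :
    z = fun _ => m := by
  subst hx
  funext i
  exact le_antisymm (hz.1.2 i) (hz.2.2 _ ⟨monotone_const, fun _ => le_rfl⟩ (by simp) i)

theorem eq_zero_of_eq_top (hx : x = fun _ => m) (hz : IsPseudocomplementL n m x z) :
    z = fun _ => 0 := by
  subst hx
  funext i
  have hdisj : min m (z i) ≤ 0 := hz.2.1 i
  have hle := hz.1.2 i
  omega

theorem eq_zero_of_ne_zero (hx : Monotone x) (hx0 : x ≠ fun _ => 0)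
    (hz : IsPseudocomplementL n m x z) : z = fun _ => 0 := by
  obtain ⟨k, hk⟩ := Function.ne_iff.mp hx0
  have hzk : z k = 0 := by
    have := hz.2.1 k
    omega
  funext i
  rcases le_total k i with hki | hik
  · have hxi : x k ≤ x i := hx hki
    have := hz.2.1 i
    omega
  · exact Nat.eq_zero_of_le_zero (hzk ▸ hz.1.1 hik)

end IsPseudocomplementL

theorem regular_iff_bot_or_top (n m : ℕ) (h hc hcc : Fin n → ℕ)
    (H : h ∈ LPathSet n m)
    (Hc : IsPseudocomplementL n m h hc) (Hcc : IsPseudocomplementL n m hc hcc) :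
    hcc = h ↔ (h = fun _ => 0) ∨ (h = fun _ => m) := by
  by_cases h0 : h = fun _ => 0
  · have hc_top := Hc.eq_top_of_eq_zero h0
    have hcc_zero := Hcc.eq_zero_of_eq_top hc_top
    simp [h0, hcc_zero]
  · have hc_zero := Hc.eq_zero_of_ne_zero H.1 h0
    have hcc_top := Hcc.eq_top_of_eq_zero hc_zero
    simp [h0, hcc_top, eq_comm]
end

section
/- Let h^(1) = (h^(1)_1,…,h^(1)_n) and h^(2) = (h^(2)_1,…,h^(2)_n) be elements of D_n^A. Define the sequence h = (h_1,…,h_n) recursively from the right by: h_n = n; and for i < n, h_i = h_{i+1} if h^(1)_i ≤ h^(2)_i and h_i = h^(2)_i otherwise. Then h ∈ D_n^A, and h is the relative pseudocomplement of h^(1) with respect to h^(2) in the lattice D_n^A, i.e., h is the greatest element z of D_n^A such that min{h^(1)_i, z_i} ≤ h^(2)_i for all i ∈ [n]. -/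
theorem Fin.induction_from_last {n : ℕ} {P : Fin n → Prop}
    (last : ∀ i : Fin n, (i : ℕ) + 1 = n → P i)
    (step : ∀ (i : Fin n) (hi : (i : ℕ) + 1 < n), P ⟨(i : ℕ) + 1, hi⟩ → P i) (i : Fin n) :
    P i := by
  cases n with
  | zero => exact i.elim0
  | succ m =>
    induction i using Fin.reverseInduction with
    | last => exact last _ (by simp)
    | cast i ih => exact step i.castSucc (by simp) ih

theorem Fin.monotone_of_le_next {α : Type*} [Preorder α] {n : ℕ} {f : Fin n → α}
    (hf : ∀ (i : Fin n) (hi : (i : ℕ) + 1 < n), f i ≤ f ⟨(i : ℕ) + 1, hi⟩) : Monotone f := by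
  cases n with
  | zero => exact fun i => i.elim0
  | succ m => exact Fin.monotone_iff_le_succ.2 fun i => hf i.castSucc (by simp)

structure IsRelPseudocomplementRec {n : ℕ} (h1 h2 h : Fin n → ℕ) : Prop where
  last : ∀ i : Fin n, (i : ℕ) + 1 = n → h i = n
  step : ∀ (i : Fin n) (hi : (i : ℕ) + 1 < n),
    h i = if h1 i ≤ h2 i then h ⟨(i : ℕ) + 1, hi⟩ else h2 i

namespace IsRelPseudocomplementRec

variable {n : ℕ} {h1 h2 h : Fin n → ℕ}

theorem le_of_min_le (hh : IsRelPseudocomplementRec h1 h2 h) {z : Fin n → ℕ}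
    (hz_mono : Monotone z) (hz_le : ∀ i, z i ≤ n) (hz : ∀ i, min (h1 i) (z i) ≤ h2 i) :
    z ≤ h := by
  refine Fin.induction_from_last (fun i hi => (hh.last i hi).symm ▸ hz_le i) fun i hi ih => ?_
  rw [hh.step i hi]
  split_ifs with hc
  · exact (hz_mono (Fin.mk_le_mk.2 (Nat.le_succ _))).trans ih
  · exact (min_le_iff.1 (hz i)).resolve_left hc

theorem apply_le (hh : IsRelPseudocomplementRec h1 h2 h) (h2_le : ∀ i, h2 i ≤ n) (i : Fin n) :
    h i ≤ n := by
  induction i using Fin.induction_from_last with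
  | last i hi => exact (hh.last i hi).le
  | step i hi ih =>
    rw [hh.step i hi]
    split_ifs
    exacts [ih, h2_le i]

theorem monotone (hh : IsRelPseudocomplementRec h1 h2 h) (h2_mono : Monotone h2)
    (h2_le_h : h2 ≤ h) : Monotone h :=
  Fin.monotone_of_le_next fun i hi => by
    rw [hh.step i hi]
    split_ifs
    · exact le_rfl
    · exact (h2_mono (Fin.mk_le_mk.2 (Nat.le_succ _))).trans (h2_le_h _)

theorem min_apply_le (hh : IsRelPseudocomplementRec h1 h2 h)
    (h2_ge : ∀ i : Fin n, (i : ℕ) + 1 ≤ h2 i) (i : Fin n) : min (h1 i) (h i) ≤ h2 i := by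
  by_cases hc : h1 i ≤ h2 i
  · exact min_le_of_left_le hc
  refine min_le_of_right_le ?_
  rcases (Nat.succ_le_of_lt i.isLt).lt_or_eq with hi | hi
  · rw [hh.step i hi, if_neg hc]
  · rw [hh.last i hi]
    exact hi ▸ h2_ge i

end IsRelPseudocomplementRec

theorem rel_pseudocomplement_dyckA_general (n : ℕ) (h1 h2 h : Fin n → ℕ)
    (H2 : h2 ∈ DyckASet n)
    -- the recursive definition of `h` from the right: `h_n = n`, and for `i < n`,
    -- `h_i = h_{i+1}` if `h1_i ≤ h2_i`, and `h_i = h2_i` otherwise.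
    (hlast : ∀ i : Fin n, (i : ℕ) + 1 = n → h i = n)
    (hrec : ∀ i : Fin n, ∀ hi : (i : ℕ) + 1 < n,
      h i = if h1 i ≤ h2 i then h ⟨(i : ℕ) + 1, hi⟩ else h2 i) :
    h ∈ DyckASet n ∧
    (∀ i, min (h1 i) (h i) ≤ h2 i) ∧
    (∀ z ∈ DyckASet n, (∀ i, min (h1 i) (z i) ≤ h2 i) → z ≤ h) := by
  obtain ⟨h2_mono, h2_bd⟩ := H2
  have hh : IsRelPseudocomplementRec h1 h2 h := ⟨hlast, hrec⟩
  have h2_le_h : h2 ≤ h :=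
    hh.le_of_min_le h2_mono (fun i => (h2_bd i).2) fun i => min_le_right _ _
  refine ⟨⟨hh.monotone h2_mono h2_le_h, fun i => ⟨(h2_bd i).1.trans (h2_le_h i), ?_⟩⟩,
    hh.min_apply_le fun i => (h2_bd i).1, ?_⟩
  · exact hh.apply_le (fun i => (h2_bd i).2) i
  · rintro z ⟨hz_mono, hz_bd⟩ hz
    exact hh.le_of_min_le hz_mono (fun i => (hz_bd i).2) hz

theorem rel_pseudocomplement_dyckA (n : ℕ) (h1 h2 h : Fin n → ℕ)
    (H1 : h1 ∈ DyckASet n) (H2 : h2 ∈ DyckASet n)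
    -- the recursive definition of `h` from the right: `h_n = n`, and for `i < n`,
    -- `h_i = h_{i+1}` if `h1_i ≤ h2_i`, and `h_i = h2_i` otherwise.
    (hlast : ∀ i : Fin n, (i : ℕ) + 1 = n → h i = n)
    (hrec : ∀ i : Fin n, ∀ hi : (i : ℕ) + 1 < n,
      h i = if h1 i ≤ h2 i then h ⟨(i : ℕ) + 1, hi⟩ else h2 i) :
    h ∈ DyckASet n ∧
    (∀ i, min (h1 i) (h i) ≤ h2 i) ∧
    (∀ z ∈ DyckASet n, (∀ i, min (h1 i) (z i) ≤ h2 i) → z ≤ h) :=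
  rel_pseudocomplement_dyckA_general n h1 h2 h H2 hlast hrec
end

section
/- An element h = (h_1,…,h_n) of D_n^A is regular, i.e., (h^c)^c = h where h^c denotes the pseudocomplement of h in the lattice D_n^A, if and only if for every i ∈ [n], either h_i = i, or, writing c = h_i (so c > i), one has h_j = c for all j with i ≤ j ≤ c. -/
/-- `z` is the pseudocomplement of `x` in `D_n^A`: the greatest element `z` of `D_n^A`
with `x ∧ z ≤ 0`, where `∧` is the componentwise minimum and `0 = (1, 2, …, n)` is the
least element. -/
def IsPseudocomplementA (n : ℕ) (x z : Fin n → ℕ) : Prop :=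
  z ∈ DyckASet n ∧ (∀ i : Fin n, min (x i) (z i) ≤ (i : ℕ) + 1) ∧
    ∀ w ∈ DyckASet n, (∀ i : Fin n, min (x i) (w i) ≤ (i : ℕ) + 1) → w ≤ z

/-!
A sequence `z ∈ D_n^A` satisfies `min (x_k, z_k) ≤ k` for all `k` exactly when `z` touches the
diagonal at every `k` where `x` leaves it; monotonicity then forces `z_i ≤ k` for every such
`k ≥ i`. Hence `x^c_i` is the first `k ≥ i` with `x_k > k`, or `n` if there is none. Applied
twice, `h^cc_i` is the first `k ≥ i` with `h_k = k` (and `h_n = n` always qualifies). As `h` is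
weakly increasing, `h_i ≤ h^cc_i`, with equality iff `h_i` is itself such a `k`, i.e. iff
`h_{h_i} = h_i`, which is the stated condition.
-/

/-- With 0-indexed `i`, this is `min (n, min {k + 1 | i ≤ k, k + 1 < x k})`. -/
def dyckACompl (n : ℕ) (x : Fin n → ℕ) (i : Fin n) : ℕ :=
  Finset.univ.fold min n
    (fun k : Fin n => if (i : ℕ) ≤ k ∧ (k : ℕ) + 1 < x k then (k : ℕ) + 1 else n)

section DyckACompl

variable {n : ℕ} {x : Fin n → ℕ}

theorem le_dyckACompl_iff {i : Fin n} {c : ℕ} :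
    c ≤ dyckACompl n x i ↔
      c ≤ n ∧ ∀ k : Fin n, (i : ℕ) ≤ k → (k : ℕ) + 1 < x k → c ≤ k + 1 := by
  rw [dyckACompl, Finset.le_fold_min]
  refine and_congr_right fun hc => ⟨fun h k hik hk => ?_, fun h k _ => ?_⟩
  · simpa only [hik, hk, and_self, if_true] using h k (Finset.mem_univ k)
  · split_ifs with hk
    exacts [h k hk.1 hk.2, hc]

theorem dyckACompl_le_iff {i : Fin n} {c : ℕ} :
    dyckACompl n x i ≤ c ↔
      n ≤ c ∨ ∃ k : Fin n, (i : ℕ) ≤ k ∧ (k : ℕ) + 1 < x k ∧ (k : ℕ) + 1 ≤ c := by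
  rw [dyckACompl, Finset.fold_min_le]
  constructor
  · rintro (hn | ⟨k, -, hk⟩)
    · exact Or.inl hn
    · split_ifs at hk with hcond
      exacts [Or.inr ⟨k, hcond.1, hcond.2, hk⟩, Or.inl hk]
  · rintro (hn | ⟨k, hik, hk, hkc⟩)
    · exact Or.inl hn
    · exact Or.inr ⟨k, Finset.mem_univ k, by rwa [if_pos ⟨hik, hk⟩]⟩

theorem dyckACompl_le (x : Fin n → ℕ) (i : Fin n) : dyckACompl n x i ≤ n :=
  dyckACompl_le_iff.2 (Or.inl le_rfl)

theorem dyckACompl_le_succ {i k : Fin n} (hik : (i : ℕ) ≤ k) (hk : (k : ℕ) + 1 < x k) :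
    dyckACompl n x i ≤ k + 1 :=
  dyckACompl_le_iff.2 (Or.inr ⟨k, hik, hk, le_rfl⟩)

theorem dyckACompl_mem (x : Fin n → ℕ) : dyckACompl n x ∈ DyckASet n := by
  refine ⟨fun i i' hii' => ?_, fun i => ⟨?_, dyckACompl_le x i⟩⟩
  · exact le_dyckACompl_iff.2 ⟨dyckACompl_le x i,
      fun k hk hxk => dyckACompl_le_succ ((Fin.le_iff_val_le_val.1 hii').trans hk) hxk⟩
  · exact le_dyckACompl_iff.2 ⟨i.isLt, fun k hik _ => by omega⟩

theorem min_dyckACompl_le (i : Fin n) : min (x i) (dyckACompl n x i) ≤ i + 1 := by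
  by_cases hx : x i ≤ i + 1
  · exact min_le_of_left_le hx
  · exact min_le_of_right_le (dyckACompl_le_succ le_rfl (not_le.1 hx))

theorem IsPseudocomplementA.eq_dyckACompl {z : Fin n → ℕ} (hz : IsPseudocomplementA n x z) :
    z = dyckACompl n x := by
  obtain ⟨⟨hz_mono, hz_bound⟩, hz_min, hz_max⟩ := hz
  refine le_antisymm (fun i => le_dyckACompl_iff.2 ⟨(hz_bound i).2, fun k hik hk => ?_⟩)
    (hz_max _ (dyckACompl_mem x) min_dyckACompl_le)
  have := hz_min k
  exact (hz_mono (Fin.le_iff_val_le_val.2 hik)).trans (by omega)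

theorem IsPseudocomplementA.le_of_isPseudocomplementA {y z : Fin n → ℕ} (hx : x ∈ DyckASet n)
    (hy : IsPseudocomplementA n x y) (hz : IsPseudocomplementA n y z) : x ≤ z :=
  hz.2.2 x hx fun i => min_comm (x i) (y i) ▸ hy.2.1 i

theorem succ_lt_dyckACompl_iff {k : Fin n} (hk : (k : ℕ) + 1 ≤ x k) :
    (k : ℕ) + 1 < dyckACompl n x k ↔ x k = k + 1 ∧ (k : ℕ) + 1 < n := by
  rw [← not_le, dyckACompl_le_iff]
  constructor
  · intro h
    refine ⟨?_, ?_⟩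
    · by_contra hne
      exact h (Or.inr ⟨k, le_rfl, by omega, le_rfl⟩)
    · by_contra hkn
      exact h (Or.inl (by omega))
  · rintro ⟨hxk, hkn⟩ (hn | ⟨j, hkj, hj, hjk⟩)
    · omega
    · obtain rfl : j = k := Fin.ext (by omega)
      omega

theorem dyckACompl_dyckACompl_le_iff (hx : x ∈ DyckASet n) {i : Fin n} {c : ℕ} :
    dyckACompl n (dyckACompl n x) i ≤ c ↔
      ∃ k : Fin n, (i : ℕ) ≤ k ∧ x k = k + 1 ∧ (k : ℕ) + 1 ≤ c := by
  rw [dyckACompl_le_iff]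
  constructor
  · rintro (hn | ⟨k, hik, hk, hkc⟩)
    · -- the last position always lies on the diagonal
      have := i.isLt
      let last : Fin n := ⟨n - 1, by omega⟩
      have hlast : (last : ℕ) = n - 1 := rfl
      have := hx.2 last
      exact ⟨last, by omega, by omega, by omega⟩
    · exact ⟨k, hik, ((succ_lt_dyckACompl_iff (hx.2 k).1).1 hk).1, hkc⟩
  · rintro ⟨k, hik, hk, hkc⟩
    by_cases hkn : (k : ℕ) + 1 < n
    · exact Or.inr ⟨k, hik, (succ_lt_dyckACompl_iff (hx.2 k).1).2 ⟨hk, hkn⟩, hkc⟩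
    · exact Or.inl (by omega)

end DyckACompl

theorem exists_eq_succ_le_iff {n : ℕ} {h : Fin n → ℕ} (hh : h ∈ DyckASet n) (i : Fin n) :
    (∃ k : Fin n, (i : ℕ) ≤ k ∧ h k = k + 1 ∧ (k : ℕ) + 1 ≤ h i) ↔
      h i = (i : ℕ) + 1 ∨
        ((i : ℕ) + 1 < h i ∧
          ∀ j : Fin n, (i : ℕ) ≤ (j : ℕ) → (j : ℕ) + 1 ≤ h i → h j = h i) := by
  obtain ⟨hmono, hbound⟩ := hh
  constructor
  · rintro ⟨k, hik, hk, hki⟩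
    rcases hik.eq_or_lt with hik | hik
    · obtain rfl : i = k := Fin.ext hik
      exact Or.inl hk
    · have hhik := hmono (Fin.le_iff_val_le_val.2 hik.le)
      refine Or.inr ⟨by omega, fun j hij hji => ?_⟩
      have := hmono (Fin.le_iff_val_le_val.2 hij)
      have := hmono (show j ≤ k from Fin.le_iff_val_le_val.2 (by omega))
      omega
  · rintro (hi | ⟨hi, hall⟩)
    · exact ⟨i, le_rfl, hi, hi.ge⟩
    · have := (hbound i).2
      let k : Fin n := ⟨h i - 1, by omega⟩
      have hk : (k : ℕ) = h i - 1 := rfl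
      exact ⟨k, by omega, by have := hall k (by omega) (by omega); omega, by omega⟩

theorem regular_dyckA_iff (n : ℕ) (h hc hcc : Fin n → ℕ)
    (H : h ∈ DyckASet n)
    (Hc : IsPseudocomplementA n h hc) (Hcc : IsPseudocomplementA n hc hcc) :
    hcc = h ↔
      ∀ i : Fin n, h i = (i : ℕ) + 1 ∨
        ((i : ℕ) + 1 < h i ∧
          ∀ j : Fin n, (i : ℕ) ≤ (j : ℕ) → (j : ℕ) + 1 ≤ h i → h j = h i) := by
  have hcc_eq : hcc = dyckACompl n (dyckACompl n h) := by
    rw [Hcc.eq_dyckACompl, Hc.eq_dyckACompl]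
  have h_le : h ≤ hcc := Hc.le_of_isPseudocomplementA H Hcc
  rw [funext_iff]
  refine forall_congr' fun i => ?_
  rw [← exists_eq_succ_le_iff H, ← dyckACompl_dyckACompl_le_iff H, ← hcc_eq]
  exact ⟨Eq.le, fun hle => le_antisymm hle (h_le i)⟩
end

section
/- For every n > 0, the number of regular elements of the lattice D_n^A (elements h with (h^c)^c = h, where h^c is the pseudocomplement) is exactly 2^{n−1}. -/
namespace DyckA

open Finset

variable {n : ℕ}

/-- Indices (0-based) at which `x` lies strictly above the least element `(1, …, n)`. -/
def support (x : Fin n → ℕ) : Finset (Fin n) :=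
  {j | (j : ℕ) + 2 ≤ x j}

def innerIndices (n : ℕ) : Finset (Fin n) :=
  {j | (j : ℕ) < n - 1}

lemma card_innerIndices : #(innerIndices n) = n - 1 := by
  rw [innerIndices, Fin.card_filter_val_lt]
  omega

lemma support_subset_innerIndices {x : Fin n → ℕ} (hx : x ∈ DyckASet n) :
    support x ⊆ innerIndices n := by
  intro j hj
  simp only [support, innerIndices, mem_filter, mem_univ, true_and] at hj ⊢
  have := (hx.2 j).2
  omega

/-- The greatest element of `D_n^A` with `h_j = j + 1` for every `j ∈ T`. -/
def ceil (T : Finset (Fin n)) (i : Fin n) : ℕ :=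
  {j ∈ T | i ≤ j}.fold min n (fun j : Fin n => (j : ℕ) + 1)

lemma le_ceil_iff {T : Finset (Fin n)} {i : Fin n} {c : ℕ} :
    c ≤ ceil T i ↔ c ≤ n ∧ ∀ j ∈ T, i ≤ j → c ≤ (j : ℕ) + 1 := by
  simp [ceil, le_fold_min]

lemma ceil_mem_dyckASet (T : Finset (Fin n)) : ceil T ∈ DyckASet n := by
  have hceil := fun i => le_ceil_iff.mp (le_refl (ceil T i))
  refine ⟨fun i i' hii' => ?_, fun i => ⟨?_, (hceil i).1⟩⟩
  · exact le_ceil_iff.mpr ⟨(hceil i).1, fun j hj hij => (hceil i).2 j hj (hii'.trans hij)⟩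
  · exact le_ceil_iff.mpr ⟨i.isLt, fun j _ hij => Nat.succ_le_succ hij⟩

lemma ceil_le_of_mem {T : Finset (Fin n)} {j : Fin n} (hj : j ∈ T) : ceil T j ≤ (j : ℕ) + 1 :=
  (le_ceil_iff.mp le_rfl).2 j hj le_rfl

lemma support_ceil (T : Finset (Fin n)) : support (ceil T) = innerIndices n \ T := by
  ext j
  simp only [support, innerIndices, mem_sdiff, mem_filter, mem_univ, true_and, le_ceil_iff]
  constructor
  · rintro ⟨hjn, hT⟩
    refine ⟨by omega, fun hj => ?_⟩
    have := hT j hj le_rfl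
    omega
  · rintro ⟨hjn, hj⟩
    refine ⟨by omega, fun k hk hjk => ?_⟩
    obtain hlt | rfl := hjk.lt_or_eq
    · exact Nat.succ_le_succ hlt
    · exact absurd hk hj

lemma isPseudocomplementA_ceil_support (x : Fin n → ℕ) :
    IsPseudocomplementA n x (ceil (support x)) := by
  refine ⟨ceil_mem_dyckASet _, fun i => ?_, fun w hw hmeet i => ?_⟩
  · by_cases hi : i ∈ support x
    · exact (min_le_right _ _).trans (ceil_le_of_mem hi)
    · simp only [support, mem_filter, mem_univ, true_and] at hi
      exact (min_le_left _ _).trans (by omega)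
  · rw [le_ceil_iff]
    refine ⟨(hw.2 i).2, fun j hj hij => (hw.1 hij).trans ?_⟩
    simp only [support, mem_filter, mem_univ, true_and] at hj
    have := hmeet j
    omega

lemma eq_ceil_support_of_isPseudocomplementA {x z : Fin n → ℕ} (h : IsPseudocomplementA n x z) :
    z = ceil (support x) :=
  have hc := isPseudocomplementA_ceil_support x
  le_antisymm (hc.2.2 z h.1 h.2.1) (h.2.2 _ hc.1 hc.2.1)

lemma support_ceil_sdiff {T : Finset (Fin n)} (hT : T ⊆ innerIndices n) :
    innerIndices n \ support (ceil T) = T := by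
  rw [support_ceil, Finset.sdiff_sdiff_eq_self hT]

lemma injOn_ceil : Set.InjOn ceil ((innerIndices n).powerset : Set (Finset (Fin n))) :=
  Set.LeftInvOn.injOn (f₁' := fun h => innerIndices n \ support h) fun _ hT =>
    support_ceil_sdiff (by simpa using hT)

lemma regular_eq_image_ceil :
    {h : Fin n → ℕ | h ∈ DyckASet n ∧
      ∃ hc hcc : Fin n → ℕ, IsPseudocomplementA n h hc ∧
        IsPseudocomplementA n hc hcc ∧ hcc = h} =
      ceil '' ↑(innerIndices n).powerset := by
  ext x
  constructor
  · rintro ⟨-, hc, hcc, hpc, hpcc, rfl⟩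
    refine ⟨support hc, ?_, (eq_ceil_support_of_isPseudocomplementA hpcc).symm⟩
    simpa using support_subset_innerIndices hpc.1
  · rintro ⟨T, hT, rfl⟩
    have hT : T ⊆ innerIndices n := by simpa using hT
    have hpc := isPseudocomplementA_ceil_support (ceil T)
    refine ⟨ceil_mem_dyckASet T, _, _, hpc, isPseudocomplementA_ceil_support _, ?_⟩
    rw [support_ceil, support_ceil_sdiff hT]

end DyckA

open DyckA in
theorem card_regular_dyckA_general (n : ℕ) :
    {h : Fin n → ℕ | h ∈ DyckASet n ∧
      ∃ hc hcc : Fin n → ℕ, IsPseudocomplementA n h hc ∧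
        IsPseudocomplementA n hc hcc ∧ hcc = h}.ncard = 2 ^ (n - 1) := by
  rw [regular_eq_image_ceil, injOn_ceil.ncard_image, Set.ncard_coe_finset,
    Finset.card_powerset, card_innerIndices]

theorem card_regular_dyckA (n : ℕ) (hn : 0 < n) :
    {h : Fin n → ℕ | h ∈ DyckASet n ∧
      ∃ hc hcc : Fin n → ℕ, IsPseudocomplementA n h hc ∧
        IsPseudocomplementA n hc hcc ∧ hcc = h}.ncard = 2 ^ (n - 1) :=
  card_regular_dyckA_general n
end
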